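/- arXiv:math/0507367 — 6 statements merged into one kernel-verified Lean document; each statement's English description precedes it below -/
import Mathlib

section
/- For every n ≥ 2, E[g²(X₁Y₁/(X̄Ȳ))] = ((n−1)²/n²) ∫₀ⁿ ∫₀ⁿ g²(xy) (1 − x/n)^{n−2} (1 − y/n)^{n−2} dy dx. -/
open MeasureTheory ProbabilityTheory Filter Real Topology

/-- The sample mean of the first `n` variables of the sequence `X`. -/
noncomputable def sampleMean {Ω : Type*} (X : ℕ → Ω → ℝ) (n : ℕ) (ω : Ω) : ℝ :=
  (∑ i ∈ Finset.range n, X i ω) / n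

open Set
open scoped ENNReal

/-!
`U = X₁ / X̄` and `V = Y₁ / Ȳ` are independent, being functions of disjoint blocks of the
sample, and each has the law `n · Beta(1, n - 1)`. Indeed, with `R = X₂ + ⋯ + Xₙ` the event
`{U > t}` is `{t / (n - t) · R < X₁}`; as `X₁` is exponential and independent of `R`, its
probability is the Laplace transform `E[exp (-t R / (n - t))] = (1 - t / n) ^ (n - 1)`.
The expectation of `g² (U V)` is then the integral of `g² (x y)` against the product of the two
densities `(n - 1) / n · (1 - x / n) ^ (n - 2)` on `(0, n]`.
-/

theorem ProbabilityTheory.iIndepFun.indepFun_of_measurable_iSup_comap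
    {Ω ι κ 𝓧 β γ : Type*} [MeasurableSpace Ω] {μ : Measure Ω}
    [m𝓧 : MeasurableSpace 𝓧] [MeasurableSpace β] [MeasurableSpace γ]
    {X : ι → Ω → 𝓧} {Y : κ → Ω → 𝓧} (hXY : iIndepFun (Sum.elim X Y) μ)
    (hX : ∀ i, Measurable (X i)) (hY : ∀ j, Measurable (Y j)) {U : Ω → β} {V : Ω → γ}
    (hU : Measurable[⨆ i, m𝓧.comap (X i)] U) (hV : Measurable[⨆ j, m𝓧.comap (Y j)] V) :
    IndepFun U V μ := by
  have h := indep_iSup_of_disjoint (fun k => Measurable.comap_le (Sum.rec hX hY k)) hXY.iIndep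
    isCompl_range_inl_range_inr.disjoint
  rw [iSup_range, iSup_range] at h
  exact (IndepFun_iff_Indep U V μ).2 (indep_of_indep_of_le h hU.comap_le hV.comap_le)

lemma measurable_iSup_comap {Ω ι 𝓧 : Type*} [m𝓧 : MeasurableSpace 𝓧] (X : ι → Ω → 𝓧) (i : ι) :
    Measurable[⨆ k, m𝓧.comap (X k)] (X i) :=
  Measurable.of_comap_le (le_iSup (fun k => m𝓧.comap (X k)) i)

namespace ProbabilityTheory

lemma expMeasure_Ioi {r x : ℝ} (hr : 0 < r) (hx : 0 ≤ x) :
    expMeasure r (Ioi x) = ENNReal.ofReal (exp (-(r * x))) := by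
  have := isProbabilityMeasure_expMeasure hr
  rw [← compl_Iic, prob_compl_eq_one_sub measurableSet_Iic, ← ofReal_cdf,
    cdf_expMeasure_eq hr, if_pos hx, ← ENNReal.ofReal_one,
    ← ENNReal.ofReal_sub _ (sub_nonneg.2 (exp_le_one_iff.2 (neg_nonpos.2 (by positivity)))),
    sub_sub_cancel]

lemma ae_pos_expMeasure {r : ℝ} (hr : 0 < r) : ∀ᵐ x ∂expMeasure r, 0 < x := by
  have := isProbabilityMeasure_expMeasure hr
  rw [ae_iff, show {x : ℝ | ¬0 < x} = Iic 0 by ext; simp, ← ofReal_cdf, cdf_expMeasure_eq hr]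
  simp

lemma mgf_id_expMeasure {r t : ℝ} (hr : 0 < r) (ht : t < r) :
    mgf id (expMeasure r) t = r / (r - t) := by
  have hdens : expMeasure r = volume.withDensity (exponentialPDF r) := rfl
  have hmeas : Measurable (exponentialPDF r) := (measurable_exponentialPDFReal r).ennreal_ofReal
  rw [mgf, hdens, integral_withDensity_eq_integral_toReal_smul hmeas
    (ae_of_all _ fun _ => ENNReal.ofReal_lt_top)]
  calc ∫ x, (exponentialPDF r x).toReal • exp (t * id x)
      = ∫ x in Ioi 0, r * exp ((t - r) * x) := by
        rw [← integral_Ici_eq_integral_Ioi, ← integral_indicator measurableSet_Ici]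
        congr with x
        by_cases hx : 0 ≤ x
        · rw [indicator_of_mem (mem_Ici.2 hx), exponentialPDF_of_nonneg hx,
            ENNReal.toReal_ofReal (by positivity), smul_eq_mul, mul_assoc, ← exp_add, id]
          ring_nf
        · rw [indicator_of_notMem (by simpa using hx),
            exponentialPDF_of_neg (not_le.1 hx), ENNReal.toReal_zero, zero_smul]
    _ = r / (r - t) := by
        rw [integral_const_mul, integral_exp_mul_Ioi (by linarith), mul_zero, exp_zero,
          neg_div, ← div_neg, neg_sub, mul_one_div]

variable {Ω ι : Type*} [MeasurableSpace Ω] {μ : Measure Ω} {r : ℝ}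

lemma mgf_sum_of_map_eq_expMeasure {X : ι → Ω → ℝ} (hind : iIndepFun X μ)
    (hm : ∀ i, Measurable (X i)) (hX : ∀ i, μ.map (X i) = expMeasure r) (hr : 0 < r) {t : ℝ}
    (ht : t < r) (s : Finset ι) :
    mgf (∑ i ∈ s, X i) μ t = (r / (r - t)) ^ s.card := by
  simp_rw [hind.mgf_sum hm, ← mgf_id_map (hm _).aemeasurable, hX, mgf_id_expMeasure hr ht,
    Finset.prod_const]

lemma measure_mul_lt_of_indepFun [IsFiniteMeasure μ] {R X : Ω → ℝ} (hR : Measurable R)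
    (hX : Measurable X) (hRX : IndepFun R X μ) (hXexp : μ.map X = expMeasure r) (hr : 0 < r)
    (hR0 : 0 ≤ᵐ[μ] R) {c : ℝ} (hc : 0 ≤ c) :
    μ {ω | c * R ω < X ω} = ENNReal.ofReal (mgf R μ (-(r * c))) := by
  have := isProbabilityMeasure_expMeasure hr
  have hmap : μ.map (fun ω => (R ω, X ω)) = (μ.map R).prod (expMeasure r) := by
    rw [← hXexp]
    exact (indepFun_iff_map_prod_eq_prod_map_map hR.aemeasurable hX.aemeasurable).1 hRX
  have hE : MeasurableSet {p : ℝ × ℝ | c * p.1 < p.2} :=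
    measurableSet_lt (measurable_fst.const_mul c) measurable_snd
  have hbound : ∀ᵐ ω ∂μ, ‖exp (-(r * c) * R ω)‖ ≤ 1 := by
    filter_upwards [hR0] with ω hω
    rw [norm_of_nonneg (exp_pos _).le, exp_le_one_iff, neg_mul]
    exact neg_nonpos.2 (mul_nonneg (mul_nonneg hr.le hc) hω)
  calc μ {ω | c * R ω < X ω} = (μ.map R).prod (expMeasure r) {p | c * p.1 < p.2} := by
        rw [← hmap, Measure.map_apply (hR.prodMk hX) hE]
        rfl
    _ = ∫⁻ x, expMeasure r (Ioi (c * x)) ∂μ.map R := Measure.prod_apply hE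
    _ = ∫⁻ x, ENNReal.ofReal (exp (-(r * c) * x)) ∂μ.map R := by
        refine lintegral_congr_ae ?_
        filter_upwards [(ae_map_iff hR.aemeasurable measurableSet_Ici).2 hR0] with x hx
        rw [expMeasure_Ioi hr (mul_nonneg hc hx)]
        ring_nf
    _ = ∫⁻ ω, ENNReal.ofReal (exp (-(r * c) * R ω)) ∂μ :=
        lintegral_map (measurable_const_mul _).exp.ennreal_ofReal hR
    _ = ENNReal.ofReal (mgf R μ (-(r * c))) :=
        (ofReal_integral_eq_lintegral_ofReal
          (Integrable.mono' (integrable_const 1) (by fun_prop) hbound)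
          (ae_of_all _ fun _ => (exp_pos _).le)).symm

lemma ae_forall_pos_of_map_eq_expMeasure {X : ι → Ω → ℝ} [Countable ι]
    (hm : ∀ i, Measurable (X i)) (hX : ∀ i, μ.map (X i) = expMeasure r) (hr : 0 < r) :
    ∀ᵐ ω ∂μ, ∀ i, 0 < X i ω :=
  ae_all_iff.2 fun i => ae_of_ae_map (hm i).aemeasurable (hX i ▸ ae_pos_expMeasure hr)

end ProbabilityTheory

lemma MeasureTheory.Measure.ext_of_Ioi_of_ae_mem_Ioc {μ ν : Measure ℝ} [IsProbabilityMeasure μ]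
    [IsProbabilityMeasure ν] {a b : ℝ} (hab : a < b) (hμ : ∀ᵐ x ∂μ, x ∈ Ioc a b)
    (hν : ∀ᵐ x ∂ν, x ∈ Ioc a b) (h : ∀ t ∈ Ico a b, μ (Ioi t) = ν (Ioi t)) : μ = ν := by
  have hIoi : ∀ t, μ (Ioi t) = ν (Ioi t) := by
    intro t
    rcases lt_or_ge t a with hta | hat
    · have hbelow : ∀ ρ : Measure ℝ, (∀ᵐ x ∂ρ, x ∈ Ioc a b) → ρ (Ioi t) = ρ (Ioi a) :=
        fun ρ hρ => measure_congr (hρ.mono fun x hx => propext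
          ⟨fun _ => hx.1, fun _ => hta.trans hx.1⟩)
      rw [hbelow μ hμ, hbelow ν hν, h a ⟨le_rfl, hab⟩]
    rcases lt_or_ge t b with htb | hbt
    · exact h t ⟨hat, htb⟩
    · have habove : ∀ ρ : Measure ℝ, (∀ᵐ x ∂ρ, x ∈ Ioc a b) → ρ (Ioi t) = 0 :=
        fun ρ hρ => measure_eq_zero_iff_ae_notMem.2
          (hρ.mono fun x hx hxt => not_lt.2 (hx.2.trans hbt) hxt)
      rw [habove μ hμ, habove ν hν]
  refine Measure.ext_of_Iic μ ν fun t => ?_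
  rw [← compl_Ioi, prob_compl_eq_one_sub measurableSet_Ioi, prob_compl_eq_one_sub measurableSet_Ioi,
    hIoi]

section

/-- The density of `n · Beta(1, n - 1)`, the law of `X₁ / X̄` for an i.i.d. exponential sample. -/
noncomputable def ratioDensity (n : ℕ) (x : ℝ) : ℝ := ((n : ℝ) - 1) / n * (1 - x / n) ^ (n - 2)

noncomputable def ratioMeasure (n : ℕ) : Measure ℝ :=
  (volume.restrict (Ioc 0 (n : ℝ))).withDensity fun x => ENNReal.ofReal (ratioDensity n x)

variable {n : ℕ}

lemma continuous_ratioDensity (n : ℕ) : Continuous (ratioDensity n) := by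
  unfold ratioDensity
  fun_prop

lemma ratioDensity_nonneg (hn : 1 ≤ n) {x : ℝ} (hx : x ≤ n) : 0 ≤ ratioDensity n x := by
  have hn' : (1 : ℝ) ≤ n := by exact_mod_cast hn
  have hx' : 0 ≤ 1 - x / n := sub_nonneg.2 ((div_le_one (by linarith)).2 hx)
  exact mul_nonneg (div_nonneg (by linarith) (by linarith)) (pow_nonneg hx' _)

lemma hasDerivAt_neg_one_sub_div_pow (hn : 1 ≤ n) (x : ℝ) :
    HasDerivAt (fun x : ℝ => -(1 - x / n) ^ (n - 1)) (ratioDensity n x) x := by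
  have h : HasDerivAt (fun x : ℝ => 1 - x / n) (-(1 / n)) x := by
    simpa using ((hasDerivAt_id x).div_const (n : ℝ)).const_sub 1
  refine (h.pow (n - 1)).neg.congr_deriv ?_
  rw [ratioDensity, Nat.cast_sub hn, show n - 1 - 1 = n - 2 by omega, Nat.cast_one]
  ring

lemma integral_ratioDensity (hn : 2 ≤ n) (t : ℝ) :
    ∫ x in t..n, ratioDensity n x = (1 - t / n) ^ (n - 1) := by
  rw [intervalIntegral.integral_eq_sub_of_hasDerivAt
    (fun x _ => hasDerivAt_neg_one_sub_div_pow (by omega) x)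
    ((continuous_ratioDensity n).intervalIntegrable _ _),
    div_self (by positivity), sub_self, zero_pow (by omega)]
  ring

lemma ratioMeasure_Ioi (hn : 2 ≤ n) {t : ℝ} (ht : 0 ≤ t) (htn : t ≤ n) :
    ratioMeasure n (Ioi t) = ENNReal.ofReal ((1 - t / n) ^ (n - 1)) := by
  rw [ratioMeasure, withDensity_apply _ measurableSet_Ioi,
    Measure.restrict_restrict measurableSet_Ioi, inter_comm, Ioc_inter_Ioi, max_eq_right ht,
    ← ofReal_integral_eq_lintegral_ofReal (continuous_ratioDensity n).integrableOn_Ioc,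
    ← intervalIntegral.integral_of_le htn, integral_ratioDensity hn]
  exact (ae_restrict_iff' measurableSet_Ioc).2
    (ae_of_all _ fun x hx => ratioDensity_nonneg (by omega) hx.2)

lemma ae_mem_Ioc_ratioMeasure (n : ℕ) : ∀ᵐ x ∂ratioMeasure n, x ∈ Ioc 0 (n : ℝ) :=
  (withDensity_absolutelyContinuous _ _).ae_le (ae_restrict_mem measurableSet_Ioc)

lemma isProbabilityMeasure_ratioMeasure (hn : 2 ≤ n) : IsProbabilityMeasure (ratioMeasure n) := by
  constructor
  have hIoi : Ioi 0 =ᵐ[ratioMeasure n] univ :=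
    ae_eq_univ.2 (ae_iff.1 ((ae_mem_Ioc_ratioMeasure n).mono fun x hx => hx.1))
  rw [← measure_congr hIoi, ratioMeasure_Ioi hn le_rfl (Nat.cast_nonneg n)]
  simp

lemma integral_ratioMeasure (hn : 1 ≤ n) (f : ℝ → ℝ) :
    ∫ x, f x ∂ratioMeasure n = ∫ x in 0..n, ratioDensity n x * f x := by
  rw [ratioMeasure, integral_withDensity_eq_integral_toReal_smul
    (continuous_ratioDensity n).measurable.ennreal_ofReal
    (ae_of_all _ fun _ => ENNReal.ofReal_lt_top), intervalIntegral.integral_of_le (by positivity)]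
  refine setIntegral_congr_fun measurableSet_Ioc fun x hx => ?_
  rw [ENNReal.toReal_ofReal (ratioDensity_nonneg hn hx.2), smul_eq_mul]

end

section

variable {Ω : Type*} {X : ℕ → Ω → ℝ} {n : ℕ}

lemma div_sampleMean_eq (hn : 1 ≤ n) (ω : Ω) :
    X 0 ω / sampleMean X n ω = n * X 0 ω / (X 0 ω + ∑ i ∈ Finset.Ico 1 n, X i ω) := by
  rw [sampleMean, Finset.range_eq_Ico, Finset.sum_eq_sum_Ico_succ_bot hn, div_div_eq_mul_div,
    mul_comm]

lemma measurable_sampleMean {m : MeasurableSpace Ω} (hm : ∀ i, Measurable[m] (X i)) (n : ℕ) :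
    Measurable[m] (sampleMean X n) :=
  (Finset.measurable_sum _ fun i _ => hm i).div_const _

lemma measurable_div_sampleMean {m : MeasurableSpace Ω} (hm : ∀ i, Measurable[m] (X i))
    (n : ℕ) : Measurable[m] fun ω => X 0 ω / sampleMean X n ω :=
  (hm 0).div (measurable_sampleMean hm n)

variable [MeasurableSpace Ω] {μ : Measure Ω} {r : ℝ}

lemma ae_div_sampleMean_mem_Ioc (hm : ∀ i, Measurable (X i))
    (hX : ∀ i, μ.map (X i) = expMeasure r) (hr : 0 < r) (hn : 1 ≤ n) :
    ∀ᵐ ω ∂μ, X 0 ω / sampleMean X n ω ∈ Ioc 0 (n : ℝ) := by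
  filter_upwards [ae_forall_pos_of_map_eq_expMeasure hm hX hr] with ω hpos
  have hX0 := hpos 0
  have hR : 0 ≤ ∑ i ∈ Finset.Ico 1 n, X i ω := Finset.sum_nonneg fun i _ => (hpos i).le
  have hn' : (0 : ℝ) < n := by exact_mod_cast hn
  rw [div_sampleMean_eq hn, mem_Ioc, div_le_iff₀ (by linarith)]
  exact ⟨by positivity, mul_le_mul_of_nonneg_left (by linarith) hn'.le⟩

lemma measure_lt_div_sampleMean [IsProbabilityMeasure μ] (hind : iIndepFun X μ)
    (hm : ∀ i, Measurable (X i)) (hX : ∀ i, μ.map (X i) = expMeasure r) (hr : 0 < r)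
    {t : ℝ} (ht : 0 ≤ t) (htn : t < n) :
    μ {ω | t < X 0 ω / sampleMean X n ω} = ENNReal.ofReal ((1 - t / n) ^ (n - 1)) := by
  have hn : 0 < n := by exact_mod_cast ht.trans_lt htn
  have hnt : 0 < (n : ℝ) - t := sub_pos.2 htn
  have hn0 : (n : ℝ) ≠ 0 := by positivity
  set R := ∑ i ∈ Finset.Ico 1 n, X i
  set c := t / ((n : ℝ) - t)
  have hpos := ae_forall_pos_of_map_eq_expMeasure hm hX hr
  have hR0 : 0 ≤ᵐ[μ] R := by
    filter_upwards [hpos] with ω hω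
    simpa [R] using Finset.sum_nonneg fun i _ => (hω i).le
  have hevent : {ω | t < X 0 ω / sampleMean X n ω} =ᵐ[μ] {ω | c * R ω < X 0 ω} := by
    filter_upwards [hpos] with ω hω
    have hRω : 0 ≤ ∑ i ∈ Finset.Ico 1 n, X i ω := Finset.sum_nonneg fun i _ => (hω i).le
    change (t < X 0 ω / sampleMean X n ω) = (c * R ω < X 0 ω)
    rw [eq_iff_iff, div_sampleMean_eq hn, lt_div_iff₀ (by linarith [hω 0]), div_mul_eq_mul_div,
      div_lt_iff₀ hnt]
    simp only [R, Finset.sum_apply]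
    constructor <;> intro h <;> linarith
  have hindR : IndepFun R (X 0) μ := hind.indepFun_finsetSum_of_notMem hm (by simp)
  rw [measure_congr hevent, measure_mul_lt_of_indepFun (by fun_prop)
    (hm 0) hindR (hX 0) hr hR0 (div_nonneg ht hnt.le),
    mgf_sum_of_map_eq_expMeasure hind hm hX hr (by nlinarith [div_nonneg ht hnt.le]),
    Nat.card_Ico]
  congr 2
  rw [show r - -(r * c) = r * n / (n - t) by simp only [c]; field_simp; ring]
  field_simp

lemma map_div_sampleMean_eq_ratioMeasure [IsProbabilityMeasure μ] (hind : iIndepFun X μ)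
    (hm : ∀ i, Measurable (X i)) (hX : ∀ i, μ.map (X i) = expMeasure r) (hr : 0 < r) (hn : 2 ≤ n) :
    μ.map (fun ω => X 0 ω / sampleMean X n ω) = ratioMeasure n := by
  have hU := measurable_div_sampleMean hm n
  have := Measure.isProbabilityMeasure_map (μ := μ) hU.aemeasurable
  have := isProbabilityMeasure_ratioMeasure hn
  refine Measure.ext_of_Ioi_of_ae_mem_Ioc (by positivity)
    ((ae_map_iff hU.aemeasurable measurableSet_Ioc).2
      (ae_div_sampleMean_mem_Ioc hm hX hr (by omega)))
    (ae_mem_Ioc_ratioMeasure n) fun t ht => ?_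
  rw [Measure.map_apply hU measurableSet_Ioi, ratioMeasure_Ioi hn ht.1 ht.2.le]
  exact measure_lt_div_sampleMean hind hm hX hr ht.1 ht.2

lemma map_div_sampleMean_prod_eq_ratioMeasure_prod [IsProbabilityMeasure μ] {Y : ℕ → Ω → ℝ}
    (hind : iIndepFun (Sum.elim X Y) μ) (hmX : ∀ i, Measurable (X i))
    (hmY : ∀ j, Measurable (Y j)) (hX : ∀ i, μ.map (X i) = expMeasure r)
    (hY : ∀ j, μ.map (Y j) = expMeasure r) (hr : 0 < r) (hn : 2 ≤ n) :
    μ.map (fun ω => (X 0 ω / sampleMean X n ω, Y 0 ω / sampleMean Y n ω)) =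
      (ratioMeasure n).prod (ratioMeasure n) := by
  have hUV : IndepFun (fun ω => X 0 ω / sampleMean X n ω) (fun ω => Y 0 ω / sampleMean Y n ω) μ :=
    hind.indepFun_of_measurable_iSup_comap hmX hmY
      (measurable_div_sampleMean (measurable_iSup_comap X) n)
      (measurable_div_sampleMean (measurable_iSup_comap Y) n)
  rw [(indepFun_iff_map_prod_eq_prod_map_map (measurable_div_sampleMean hmX n).aemeasurable
      (measurable_div_sampleMean hmY n).aemeasurable).1 hUV,
    map_div_sampleMean_eq_ratioMeasure (by simpa using hind.precomp Sum.inl_injective) hmX hX hr hn,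
    map_div_sampleMean_eq_ratioMeasure (by simpa using hind.precomp Sum.inr_injective) hmY hY hr hn]

end

/-- Formula (9): exact expression of `E[g²(X₁Y₁/(X̄Ȳ))]` as a double integral. -/
theorem lecam2d_formula9
    {Ω : Type*} [MeasureSpace Ω] [IsProbabilityMeasure (ℙ : Measure Ω)]
    (X Y : ℕ → Ω → ℝ)
    (hmX : ∀ i, Measurable (X i)) (hmY : ∀ j, Measurable (Y j))
    (hindep : iIndepFun (Sum.elim X Y) ℙ)
    (hX : ∀ i, Measure.map (X i) ℙ = expMeasure 1)
    (hY : ∀ j, Measure.map (Y j) ℙ = expMeasure 1)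
    (g : ℝ → ℝ) (hgm : Measurable g)
    (n : ℕ) (hn : 2 ≤ n)
    (hint : Integrable (fun ω => (g (X 0 ω * Y 0 ω / (sampleMean X n ω * sampleMean Y n ω))) ^ 2) ℙ) :
    (∫ ω, (g (X 0 ω * Y 0 ω / (sampleMean X n ω * sampleMean Y n ω))) ^ 2 ∂ℙ) =
      ((n : ℝ) - 1) ^ 2 / (n : ℝ) ^ 2 *
        ∫ x in (0 : ℝ)..(n : ℝ), ∫ y in (0 : ℝ)..(n : ℝ),
          (g (x * y)) ^ 2 * (1 - x / n) ^ (n - 2) * (1 - y / n) ^ (n - 2) := by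
  have := isProbabilityMeasure_ratioMeasure hn
  set G := fun p : ℝ × ℝ => g (p.1 * p.2) ^ 2
  have hG : Measurable G := by fun_prop
  have hUV := (measurable_div_sampleMean hmX n).prodMk (measurable_div_sampleMean hmY n)
  have hlaw := map_div_sampleMean_prod_eq_ratioMeasure_prod hindep hmX hmY hX hY one_pos hn
  have hGUV : (fun ω => g (X 0 ω * Y 0 ω / (sampleMean X n ω * sampleMean Y n ω)) ^ 2) =
      fun ω => G (X 0 ω / sampleMean X n ω, Y 0 ω / sampleMean Y n ω) := by
    simp only [G, div_mul_div_comm]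
  have hGint : Integrable G ((ratioMeasure n).prod (ratioMeasure n)) := by
    rw [← hlaw, integrable_map_measure hG.aestronglyMeasurable hUV.aemeasurable]
    rwa [hGUV] at hint
  rw [hGUV, ← integral_map hUV.aemeasurable hG.aestronglyMeasurable, hlaw, integral_prod _ hGint]
  simp only [G, integral_ratioMeasure (n := n) (by omega), ← intervalIntegral.integral_const_mul]
  refine intervalIntegral.integral_congr fun x _ => intervalIntegral.integral_congr fun y _ => ?_
  simp only [ratioDensity]
  ring
end

section
/- If g is continuous on ℝ⁺ and E[g²(X₁Y₁)] < ∞, then E[g²(X₁Y₁/(X̄Ȳ))] → E[g²(X₁Y₁)] = ∫₀^∞ ∫₀^∞ g²(xy) e^{−x} e^{−y} dy dx as n → ∞. -/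
/-!
Write `X̄ = (X₁ + W) / n` with `W = X₂ + ⋯ + Xₙ` independent of `X₁`. For `0 ≤ t < n` we have
`X₁ / X̄ ≤ t` iff `X₁ ≤ c W` with `c = t / (n - t)`, so conditioning on `W` gives
`P(X₁ / X̄ ≤ t) = 1 - E[e^{-cW}] = 1 - (1 + c)^{-(n-1)} = 1 - (1 - t/n)^{n-1}`.
Hence `X₁ / X̄` has density `(1 - 1/n) (1 - t/n)^{n-2}` on `[0, n]`; this density is at most
`e² e^{-t}` and tends to `e^{-t}` pointwise. As `X₁ / X̄` and `Y₁ / Ȳ` are independent,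
`E[g²(X₁Y₁ / (X̄Ȳ))]` is the integral of `g²(uv)` against the product of these densities, and
dominated convergence, with dominating function `e⁴ g²(uv) e^{-u} e^{-v}`, gives the limit.
-/

open MeasureTheory ProbabilityTheory Filter Real Topology Set

lemma tendsto_one_add_div_pow_sub_exp (x : ℝ) (k : ℕ) :
    Tendsto (fun n : ℕ => (1 + x / n) ^ (n - k)) atTop (𝓝 (exp x)) := by
  have hbase : Tendsto (fun n : ℕ => 1 + x / n) atTop (𝓝 1) := by
    simpa using tendsto_const_nhds.add (tendsto_const_div_atTop_nhds_zero_nat x)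
  have hquot := (tendsto_one_add_div_pow_exp x).div (hbase.pow k) (by simp)
  rw [one_pow, div_one] at hquot
  refine hquot.congr' ?_
  filter_upwards [eventually_ge_atTop k, hbase.eventually_ne one_ne_zero] with n hkn hne
  rw [Pi.div_apply, div_eq_iff (pow_ne_zero _ hne), ← pow_add, Nat.sub_add_cancel hkn]

lemma div_mean_le_iff {x w a t : ℝ} (hx : 0 < x) (hw : 0 < w) (ha : 0 < a) (ht : t < a) :
    x / ((x + w) / a) ≤ t ↔ x ≤ t / (a - t) * w := by
  rw [div_le_iff₀ (by positivity), div_mul_eq_mul_div, le_div_iff₀ (by linarith),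
    ← mul_div_assoc, le_div_iff₀ ha]
  constructor <;> intro h <;> nlinarith

lemma exponentialPDFReal_one_of_nonneg {x : ℝ} (hx : 0 ≤ x) :
    exponentialPDFReal 1 x = exp (-x) := by
  simp [exponentialPDFReal, gammaPDFReal, hx]

lemma exponentialPDFReal_of_neg {r x : ℝ} (hx : x < 0) : exponentialPDFReal r x = 0 := by
  simp [exponentialPDFReal, gammaPDFReal, hx.not_ge]

lemma integral_expMeasure {r : ℝ} (hr : 0 < r) (f : ℝ → ℝ) :
    ∫ x, f x ∂expMeasure r = ∫ x in Ioi 0, r * exp (-(r * x)) * f x := by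
  rw [show expMeasure r = volume.withDensity fun x => ENNReal.ofReal (exponentialPDFReal r x)
      from rfl, integral_withDensity_eq_integral_toReal_smul (by fun_prop)
      (.of_forall fun _ => ENNReal.ofReal_lt_top), ← integral_Ici_eq_integral_Ioi,
    ← integral_indicator measurableSet_Ici]
  congr 1 with x
  rw [ENNReal.toReal_ofReal (exponentialPDFReal_nonneg hr x), smul_eq_mul]
  by_cases hx : 0 ≤ x <;> simp [exponentialPDFReal, gammaPDFReal, hx]

lemma mgf_id_expMeasure {r t : ℝ} (hr : 0 < r) (ht : t < r) :
    mgf id (expMeasure r) t = r / (r - t) := by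
  have hexp : ∀ x, r * exp (-(r * x)) * exp (t * x) = r * exp ((t - r) * x) := fun x => by
    rw [mul_assoc, ← exp_add]; ring_nf
  simp_rw [mgf, integral_expMeasure hr, id, hexp]
  rw [integral_const_mul, integral_exp_mul_Ioi (by linarith), mul_zero, exp_zero, ← neg_sub r t,
    div_neg, neg_div, neg_neg, mul_one_div]

lemma expMeasure_Iic {r x : ℝ} (hr : 0 < r) (hx : 0 ≤ x) :
    expMeasure r (Iic x) = ENNReal.ofReal (1 - exp (-(r * x))) := by
  have := isProbabilityMeasure_expMeasure hr
  rw [← ofReal_cdf, cdf_expMeasure_eq hr, if_pos hx]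

noncomputable def meanRatioPDF (n : ℕ) : ℝ → ℝ :=
  (Icc 0 (n : ℝ)).indicator fun t => (1 - 1 / n) * (1 - t / n) ^ (n - 2)

lemma measurable_meanRatioPDF (n : ℕ) : Measurable (meanRatioPDF n) :=
  (by fun_prop : Measurable fun t : ℝ => (1 - 1 / (n : ℝ)) * (1 - t / n) ^ (n - 2)).indicator
    measurableSet_Icc

lemma one_sub_div_nonneg_of_mem_Icc {n : ℕ} {t : ℝ} (ht : t ∈ Icc 0 (n : ℝ)) :
    0 ≤ 1 - t / n :=
  sub_nonneg.2 (div_le_one_of_le₀ ht.2 n.cast_nonneg)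

lemma meanRatioPDF_nonneg (n : ℕ) (t : ℝ) : 0 ≤ meanRatioPDF n t := by
  refine indicator_nonneg (fun t ht => mul_nonneg ?_
    (pow_nonneg (one_sub_div_nonneg_of_mem_Icc ht) _)) t
  simpa [one_div] using Nat.cast_inv_le_one n

lemma meanRatioPDF_le_exp_two_mul {n : ℕ} (hn : 2 ≤ n) (t : ℝ) :
    meanRatioPDF n t ≤ exp 2 * exponentialPDFReal 1 t := by
  by_cases ht : t ∈ Icc 0 (n : ℝ)
  · have hn0 : (0 : ℝ) < n := by positivity
    have hexp : ((n - 2 : ℕ) : ℝ) * -(t / n) ≤ 2 + -t := by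
      rw [Nat.cast_sub hn, Nat.cast_ofNat, sub_mul, mul_neg, mul_div_cancel₀ _ hn0.ne']
      have : 2 * (t / n) ≤ 2 := by linarith [div_le_one_of_le₀ ht.2 hn0.le]
      linarith
    rw [meanRatioPDF, indicator_of_mem ht, exponentialPDFReal_one_of_nonneg ht.1, ← exp_add]
    calc (1 - 1 / n) * (1 - t / n) ^ (n - 2) ≤ 1 * exp (-(t / n)) ^ (n - 2) := by
          have hbase := one_sub_div_nonneg_of_mem_Icc ht
          exact mul_le_mul (sub_le_self _ (by positivity))
            (pow_le_pow_left₀ hbase (one_sub_le_exp_neg _) _) (pow_nonneg hbase _) zero_le_one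
      _ ≤ exp (2 + -t) := by rw [one_mul, ← exp_nat_mul]; exact exp_le_exp.2 hexp
  · rw [meanRatioPDF, indicator_of_notMem ht]
    exact mul_nonneg (exp_pos 2).le (exponentialPDFReal_nonneg one_pos t)

lemma tendsto_meanRatioPDF (t : ℝ) :
    Tendsto (fun n => meanRatioPDF n t) atTop (𝓝 (exponentialPDFReal 1 t)) := by
  rcases lt_or_ge t 0 with ht | ht
  · rw [exponentialPDFReal_of_neg ht]
    refine tendsto_const_nhds.congr fun n => ?_
    rw [meanRatioPDF, indicator_of_notMem fun h => ht.not_ge h.1]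
  have hlim : Tendsto (fun n : ℕ => (1 - 1 / n) * (1 + -t / n) ^ (n - 2)) atTop
      (𝓝 ((1 - 0) * exp (-t))) :=
    (tendsto_const_nhds.sub tendsto_one_div_atTop_nhds_zero_nat).mul
      (tendsto_one_add_div_pow_sub_exp (-t) 2)
  rw [sub_zero, one_mul, ← exponentialPDFReal_one_of_nonneg ht] at hlim
  refine hlim.congr' ?_
  filter_upwards [eventually_ge_atTop ⌈t⌉₊] with n hn
  rw [meanRatioPDF, indicator_of_mem (show t ∈ Icc 0 (n : ℝ) from ⟨ht, Nat.ceil_le.1 hn⟩),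
    neg_div, ← sub_eq_add_neg]

lemma lintegral_meanRatioPDF_Iic_of_neg (n : ℕ) {t : ℝ} (ht : t < 0) :
    ∫⁻ s in Iic t, ENNReal.ofReal (meanRatioPDF n s) = 0 := by
  refine (setLIntegral_congr_fun measurableSet_Iic fun s hs => ?_).trans lintegral_zero
  rw [meanRatioPDF, indicator_of_notMem fun h => (h.1.trans hs).not_gt ht, ENNReal.ofReal_zero]

lemma lintegral_meanRatioPDF_Iic {n : ℕ} (hn : 1 ≤ n) {t : ℝ} (ht : 0 ≤ t) :
    ∫⁻ s in Iic t, ENNReal.ofReal (meanRatioPDF n s) =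
      ENNReal.ofReal (1 - (1 - min t n / n) ^ (n - 1)) := by
  have hcont : Continuous fun s : ℝ => (1 - 1 / (n : ℝ)) * (1 - s / n) ^ (n - 2) := by fun_prop
  have hint : Integrable (meanRatioPDF n) :=
    hcont.integrableOn_Icc.integrable_indicator measurableSet_Icc
  have hderiv : ∀ s, HasDerivAt (fun s : ℝ => -(1 - s / n) ^ (n - 1))
      ((1 - 1 / (n : ℝ)) * (1 - s / n) ^ (n - 2)) s := fun s => by
    refine ((((hasDerivAt_id s).div_const (n : ℝ)).const_sub 1).fun_pow (n - 1)).fun_neg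
      |>.congr_deriv ?_
    rw [show n - 1 - 1 = n - 2 by omega, Nat.cast_sub hn, id]
    field_simp
    ring
  have hset : Iic t ∩ Icc 0 (n : ℝ) = Icc 0 (min t n) := by
    ext s; simp only [mem_inter_iff, mem_Iic, mem_Icc, le_min_iff]; tauto
  rw [← ofReal_integral_eq_lintegral_ofReal hint.integrableOn
      (ae_of_all _ (meanRatioPDF_nonneg n)), meanRatioPDF,
    setIntegral_indicator measurableSet_Icc, hset, integral_Icc_eq_integral_Ioc,
    ← intervalIntegral.integral_of_le (le_min ht n.cast_nonneg),
    intervalIntegral.integral_eq_sub_of_hasDerivAt (fun s _ => hderiv s)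
      (hcont.intervalIntegrable _ _)]
  rw [zero_div, sub_zero, one_pow, neg_sub_neg]

noncomputable def meanRatioMeasure (n : ℕ) : Measure ℝ :=
  volume.withDensity fun t => ENNReal.ofReal (meanRatioPDF n t)

section Densities

variable {α : Type*} [MeasurableSpace α] {ν : Measure α} [SFinite ν] {f : α → ℝ}

lemma withDensity_ofReal_prod_self (hf : Measurable f) (hf0 : ∀ x, 0 ≤ f x) :
    (ν.withDensity fun x => ENNReal.ofReal (f x)).prod
        (ν.withDensity fun x => ENNReal.ofReal (f x)) =
      (ν.prod ν).withDensity fun p => ENNReal.ofReal (f p.1 * f p.2) := by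
  rw [prod_withDensity (by fun_prop) (by fun_prop)]
  simp_rw [ENNReal.ofReal_mul (hf0 _)]

lemma integral_prod_withDensity_ofReal (hf : Measurable f) (hf0 : ∀ x, 0 ≤ f x)
    (G : α × α → ℝ) :
    ∫ p, G p ∂(ν.withDensity fun x => ENNReal.ofReal (f x)).prod
        (ν.withDensity fun x => ENNReal.ofReal (f x)) =
      ∫ p, f p.1 * f p.2 * G p ∂ν.prod ν := by
  rw [withDensity_ofReal_prod_self hf hf0, integral_withDensity_eq_integral_toReal_smul
    (by fun_prop) (ae_of_all _ fun _ => ENNReal.ofReal_lt_top)]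
  simp_rw [ENNReal.toReal_ofReal (mul_nonneg (hf0 _) (hf0 _)), smul_eq_mul]

lemma integrable_prod_withDensity_ofReal_iff (hf : Measurable f) (hf0 : ∀ x, 0 ≤ f x)
    {G : α × α → ℝ} :
    Integrable G ((ν.withDensity fun x => ENNReal.ofReal (f x)).prod
        (ν.withDensity fun x => ENNReal.ofReal (f x))) ↔
      Integrable (fun p => f p.1 * f p.2 * G p) (ν.prod ν) := by
  rw [withDensity_ofReal_prod_self hf hf0, integrable_withDensity_iff_integrable_smul'
    (by fun_prop) (ae_of_all _ fun _ => ENNReal.ofReal_lt_top)]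
  simp_rw [ENNReal.toReal_ofReal (mul_nonneg (hf0 _) (hf0 _)), smul_eq_mul]

theorem tendsto_integral_prod_withDensity_ofReal {f : ℕ → α → ℝ} {f₀ : α → ℝ} {C : ℝ}
    (hf : ∀ n, Measurable (f n)) (hf0 : ∀ n x, 0 ≤ f n x) (hf₀ : Measurable f₀)
    (hf₀0 : ∀ x, 0 ≤ f₀ x) (hlim : ∀ x, Tendsto (fun n => f n x) atTop (𝓝 (f₀ x)))
    (hbound : ∀ᶠ n in atTop, ∀ x, f n x ≤ C * f₀ x) {G : α × α → ℝ}
    (hGm : AEStronglyMeasurable G (ν.prod ν))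
    (hG : Integrable G ((ν.withDensity fun x => ENNReal.ofReal (f₀ x)).prod
      (ν.withDensity fun x => ENNReal.ofReal (f₀ x)))) :
    Tendsto (fun n => ∫ p, G p ∂(ν.withDensity fun x => ENNReal.ofReal (f n x)).prod
        (ν.withDensity fun x => ENNReal.ofReal (f n x))) atTop
      (𝓝 (∫ p, G p ∂(ν.withDensity fun x => ENNReal.ofReal (f₀ x)).prod
        (ν.withDensity fun x => ENNReal.ofReal (f₀ x)))) := by
  simp_rw [integral_prod_withDensity_ofReal (hf _) (hf0 _),
    integral_prod_withDensity_ofReal hf₀ hf₀0]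
  rw [integrable_prod_withDensity_ofReal_iff hf₀ hf₀0] at hG
  refine tendsto_integral_filter_of_dominated_convergence
    (fun p => C ^ 2 * ‖f₀ p.1 * f₀ p.2 * G p‖) (.of_forall fun n => ?_) ?_
    (hG.norm.const_mul _) (ae_of_all _ fun p => ((hlim p.1).mul (hlim p.2)).mul tendsto_const_nhds)
  · exact (((hf n).comp measurable_fst).mul ((hf n).comp measurable_snd)).aestronglyMeasurable.mul
      hGm
  · filter_upwards [hbound] with n hn
    refine ae_of_all _ fun p => ?_
    have h1 := hf0 n p.1
    have h2 := hf0 n p.2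
    simp only [norm_mul, Real.norm_of_nonneg h1, Real.norm_of_nonneg h2,
      Real.norm_of_nonneg (hf₀0 _)]
    calc f n p.1 * f n p.2 * ‖G p‖ ≤ C * f₀ p.1 * (C * f₀ p.2) * ‖G p‖ := by
          gcongr
          · exact h1.trans (hn p.1)
          · exact hn p.1
          · exact hn p.2
      _ = C ^ 2 * (f₀ p.1 * f₀ p.2 * ‖G p‖) := by ring

end Densities

theorem tendsto_integral_prod_meanRatioMeasure {G : ℝ × ℝ → ℝ}
    (hGm : AEStronglyMeasurable G (volume.prod volume))
    (hG : Integrable G ((expMeasure 1).prod (expMeasure 1))) :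
    Tendsto (fun n => ∫ p, G p ∂(meanRatioMeasure n).prod (meanRatioMeasure n)) atTop
      (𝓝 (∫ p, G p ∂(expMeasure 1).prod (expMeasure 1))) :=
  tendsto_integral_prod_withDensity_ofReal measurable_meanRatioPDF meanRatioPDF_nonneg
    (measurable_exponentialPDFReal 1) (exponentialPDFReal_nonneg one_pos) tendsto_meanRatioPDF
    (eventually_atTop.2 ⟨2, fun _ hn => meanRatioPDF_le_exp_two_mul hn⟩) hGm hG

namespace ProbabilityTheory

variable {Ω : Type*} [MeasurableSpace Ω] {μ : Measure Ω} {r : ℝ} {ξ W : Ω → ℝ}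

lemma iIndepFun.indepFun_sumElim {ι κ β : Type*} [MeasurableSpace β] {X : ι → Ω → β}
    {Y : κ → Ω → β} (h : iIndepFun (Sum.elim X Y) μ) (hX : ∀ i, Measurable (X i))
    (hY : ∀ j, Measurable (Y j)) :
    IndepFun (fun ω i => X i ω) (fun ω j => Y j ω) μ := by
  have := h.isProbabilityMeasure
  refine IndepFun.process_indepFun_process hX hY fun I J => ?_
  have hdisj : Disjoint (I.map .inl) (J.map (.inr : κ ↪ ι ⊕ κ)) := by
    simp [Finset.disjoint_left]
  exact (h.indepFun_finset _ _ hdisj (Sum.rec hX hY)).comp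
    (φ := fun v (i : I) => v ⟨.inl i, Finset.mem_map_of_mem _ i.2⟩)
    (ψ := fun v (j : J) => v ⟨.inr j, Finset.mem_map_of_mem _ j.2⟩) (by fun_prop) (by fun_prop)

lemma IndepFun.integral_comp_prodMk {β γ : Type*} [MeasurableSpace β] [MeasurableSpace γ]
    [IsFiniteMeasure μ] {U : Ω → β} {V : Ω → γ} (hU : Measurable U) (hV : Measurable V)
    (hUV : IndepFun U V μ) {G : β × γ → ℝ}
    (hG : AEStronglyMeasurable G ((μ.map U).prod (μ.map V))) :
    ∫ ω, G (U ω, V ω) ∂μ = ∫ p, G p ∂(μ.map U).prod (μ.map V) := by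
  rw [← hUV.map_prod_eq_prod_map_map hU.aemeasurable hV.aemeasurable] at hG ⊢
  exact (integral_map (hU.prodMk hV).aemeasurable hG).symm

lemma ae_pos_of_map_eq_expMeasure (hξ : Measurable ξ) (hr : 0 < r)
    (hlaw : μ.map ξ = expMeasure r) : ∀ᵐ ω ∂μ, 0 < ξ ω := by
  have hnonpos : μ (ξ ⁻¹' Iic 0) = 0 := by
    rw [← Measure.map_apply hξ measurableSet_Iic, hlaw, expMeasure_Iic hr le_rfl]
    simp
  filter_upwards [measure_eq_zero_iff_ae_notMem.1 hnonpos] with ω hω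
  simpa using hω

lemma mgf_of_map_eq_expMeasure (hξ : Measurable ξ) (hr : 0 < r)
    (hlaw : μ.map ξ = expMeasure r) {t : ℝ} (ht : t < r) : mgf ξ μ t = r / (r - t) := by
  rw [← mgf_id_map hξ.aemeasurable, hlaw, mgf_id_expMeasure hr ht]

lemma measure_le_of_indepFun_of_map_eq_expMeasure [IsProbabilityMeasure μ]
    (hξ : Measurable ξ) (hW : Measurable W) (hind : IndepFun ξ W μ) (hr : 0 < r)
    (hlaw : μ.map ξ = expMeasure r) (hW0 : ∀ᵐ ω ∂μ, 0 ≤ W ω) :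
    μ {ω | ξ ω ≤ W ω} = ENNReal.ofReal (1 - mgf W μ (-r)) := by
  have := isProbabilityMeasure_expMeasure hr
  have hpair : μ.map (fun ω => (ξ ω, W ω)) = (expMeasure r).prod (μ.map W) := by
    rw [← hlaw]
    exact (indepFun_iff_map_prod_eq_prod_map_map hξ.aemeasurable hW.aemeasurable).1 hind
  have hle : MeasurableSet {p : ℝ × ℝ | p.1 ≤ p.2} :=
    measurableSet_le measurable_fst measurable_snd
  have hbound : ∀ᵐ ω ∂μ, exp (-(r * W ω)) ≤ 1 := by
    filter_upwards [hW0] with ω hω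
    exact exp_le_one_iff.2 (by nlinarith)
  have hexp : Integrable (fun ω => exp (-(r * W ω))) μ :=
    .mono' (integrable_const 1) (by fun_prop) (by simpa using hbound)
  calc μ {ω | ξ ω ≤ W ω} = μ.map (fun ω => (ξ ω, W ω)) {p | p.1 ≤ p.2} := by
        rw [Measure.map_apply (hξ.prodMk hW) hle]; rfl
    _ = ∫⁻ w, expMeasure r (Iic w) ∂μ.map W := by
        rw [hpair, Measure.prod_apply_symm hle]; rfl
    _ = ∫⁻ w, ENNReal.ofReal (1 - exp (-(r * w))) ∂μ.map W := by
        refine lintegral_congr_ae ?_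
        filter_upwards [(ae_map_iff hW.aemeasurable measurableSet_Ici).2 hW0] with w hw
        exact expMeasure_Iic hr hw
    _ = ENNReal.ofReal (1 - mgf W μ (-r)) := by
        rw [lintegral_map (by fun_prop) hW, ← ofReal_integral_eq_lintegral_ofReal
          (f := fun ω => 1 - exp (-(r * W ω))) ((integrable_const 1).sub hexp)
          (by filter_upwards [hbound] with ω hω; simpa using hω),
          integral_sub (integrable_const 1) hexp, integral_const, probReal_univ, one_smul, mgf]
        simp_rw [neg_mul]

theorem map_div_mean_eq_meanRatioMeasure [IsProbabilityMeasure μ] (hξ : Measurable ξ)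
    (hW : Measurable W) (hind : IndepFun ξ W μ) (hlaw : μ.map ξ = expMeasure 1)
    (hWpos : ∀ᵐ ω ∂μ, 0 < W ω) {n : ℕ} (hn : 2 ≤ n)
    (hmgf : ∀ c, 0 ≤ c → mgf W μ (-c) = (1 + c)⁻¹ ^ (n - 1)) :
    μ.map (fun ω => ξ ω / ((ξ ω + W ω) / n)) = meanRatioMeasure n := by
  have hn0 : (0 : ℝ) < n := by positivity
  have hU : Measurable fun ω => ξ ω / ((ξ ω + W ω) / n) := by fun_prop
  have hpos : ∀ᵐ ω ∂μ, 0 < ξ ω ∧ 0 < W ω :=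
    (ae_pos_of_map_eq_expMeasure hξ one_pos hlaw).and hWpos
  have := Measure.isProbabilityMeasure_map (μ := μ) hU.aemeasurable
  refine Measure.ext_of_Iic _ _ fun t => ?_
  rw [Measure.map_apply hU measurableSet_Iic, meanRatioMeasure,
    withDensity_apply _ measurableSet_Iic]
  rcases lt_or_ge t 0 with ht0 | ht0
  · rw [lintegral_meanRatioPDF_Iic_of_neg n ht0, measure_eq_zero_iff_ae_notMem]
    filter_upwards [hpos] with ω ⟨hξω, hWω⟩ hle
    exact (hle.trans ht0.le).not_gt (by positivity)
  rw [lintegral_meanRatioPDF_Iic (by omega) ht0]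
  rcases lt_or_ge t n with htn | htn
  · set c := t / (n - t)
    have hc : 0 ≤ c := div_nonneg ht0 (by linarith)
    have hcinv : (1 + c)⁻¹ = 1 - t / n := by
      have hnt : (n : ℝ) - t ≠ 0 := by linarith
      rw [show 1 + c = n / (n - t) by simp only [c]; field_simp; ring, inv_div]
      field_simp
    calc μ ((fun ω => ξ ω / ((ξ ω + W ω) / n)) ⁻¹' Iic t) = μ {ω | ξ ω ≤ c * W ω} := by
          refine measure_congr ?_
          filter_upwards [hpos] with ω ⟨hξω, hWω⟩
          exact propext (div_mean_le_iff hξω hWω hn0 htn)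
      _ = ENNReal.ofReal (1 - mgf (fun ω => c * W ω) μ (-1)) :=
          measure_le_of_indepFun_of_map_eq_expMeasure hξ (by fun_prop)
            (hind.comp measurable_id (measurable_const_mul c)) one_pos hlaw
            (by filter_upwards [hWpos] with ω hω; positivity)
      _ = ENNReal.ofReal (1 - (1 - min t n / n) ^ (n - 1)) := by
          rw [mgf_const_mul, mul_neg_one, hmgf c hc, hcinv, min_eq_left htn.le]
  · rw [min_eq_right htn, div_self hn0.ne', sub_self, zero_pow (by omega), sub_zero,
      ENNReal.ofReal_one, ← prob_compl_eq_zero_iff (hU measurableSet_Iic),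
      measure_eq_zero_iff_ae_notMem]
    filter_upwards [hpos] with ω ⟨hξω, hWω⟩ hgt
    refine hgt (le_trans (le_of_lt ?_) htn)
    rw [div_lt_iff₀ (by positivity), mul_div_cancel₀ _ hn0.ne']
    linarith

lemma measurable_sampleMean {X : ℕ → Ω → ℝ} (hm : ∀ i, Measurable (X i)) (n : ℕ) :
    Measurable (sampleMean X n) := by
  unfold sampleMean
  fun_prop

theorem map_div_sampleMean_eq_meanRatioMeasure {X : ℕ → Ω → ℝ} (hX : iIndepFun X μ)
    (hm : ∀ i, Measurable (X i)) (hlaw : ∀ i, μ.map (X i) = expMeasure 1) {n : ℕ} (hn : 2 ≤ n) :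
    μ.map (fun ω => X 0 ω / sampleMean X n ω) = meanRatioMeasure n := by
  have := hX.isProbabilityMeasure
  let W := fun ω => ∑ i ∈ Finset.Ico 1 n, X i ω
  have hsplit :
      (fun ω => X 0 ω / sampleMean X n ω) = fun ω => X 0 ω / ((X 0 ω + W ω) / n) := by
    ext ω
    rw [sampleMean, Finset.sum_range_eq_add_Ico _ (by omega)]
  have hWpos : ∀ᵐ ω ∂μ, 0 < W ω := by
    filter_upwards [ae_all_iff.2 fun i => ae_pos_of_map_eq_expMeasure (hm i) one_pos (hlaw i)]
      with ω hω
    exact Finset.sum_pos (fun i _ => hω i) ⟨1, Finset.mem_Ico.2 ⟨le_rfl, by omega⟩⟩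
  have hind : IndepFun (X 0) W μ := by
    simpa only [Finset.sum_fn] using (hX.indepFun_finsetSum_of_notMem hm (by simp)).symm
  refine hsplit ▸ map_div_mean_eq_meanRatioMeasure (hm 0)
    (Finset.measurable_sum _ fun i _ => hm i) hind (hlaw 0) hWpos hn fun c hc => ?_
  rw [← Finset.sum_fn, hX.mgf_sum hm, Finset.prod_congr rfl fun i _ =>
    mgf_of_map_eq_expMeasure (hm i) one_pos (hlaw i) (by linarith : -c < 1),
    Finset.prod_const, Nat.card_Ico, one_div, sub_neg_eq_add]

theorem integral_comp_div_sampleMean {X Y : ℕ → Ω → ℝ} (hmX : ∀ i, Measurable (X i))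
    (hmY : ∀ j, Measurable (Y j)) (hindep : iIndepFun (Sum.elim X Y) μ)
    (hX : ∀ i, μ.map (X i) = expMeasure 1) (hY : ∀ j, μ.map (Y j) = expMeasure 1)
    {G : ℝ × ℝ → ℝ} (hG : Measurable G) {n : ℕ} (hn : 2 ≤ n) :
    ∫ ω, G (X 0 ω / sampleMean X n ω, Y 0 ω / sampleMean Y n ω) ∂μ =
      ∫ p, G p ∂(meanRatioMeasure n).prod (meanRatioMeasure n) := by
  have := hindep.isProbabilityMeasure
  have hφ : Measurable fun x : ℕ → ℝ => x 0 / sampleMean (fun i x => x i) n x :=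
    (measurable_pi_apply 0).div (measurable_sampleMean measurable_pi_apply n)
  have hU : μ.map (fun ω => X 0 ω / sampleMean X n ω) = meanRatioMeasure n :=
    map_div_sampleMean_eq_meanRatioMeasure (hindep.precomp Sum.inl_injective) hmX hX hn
  have hV : μ.map (fun ω => Y 0 ω / sampleMean Y n ω) = meanRatioMeasure n :=
    map_div_sampleMean_eq_meanRatioMeasure (hindep.precomp Sum.inr_injective) hmY hY hn
  calc _ = ∫ p, G p ∂(μ.map fun ω => X 0 ω / sampleMean X n ω).prod
        (μ.map fun ω => Y 0 ω / sampleMean Y n ω) :=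
        ((hindep.indepFun_sumElim hmX hmY).comp hφ hφ).integral_comp_prodMk
          (hφ.comp (measurable_pi_lambda _ hmX)) (hφ.comp (measurable_pi_lambda _ hmY))
          hG.aestronglyMeasurable
    _ = _ := by rw [hU, hV]

end ProbabilityTheory

theorem lecam2d_formula14_general
    {Ω : Type*} [MeasureSpace Ω] [IsProbabilityMeasure (ℙ : Measure Ω)]
    (X Y : ℕ → Ω → ℝ)
    (hmX : ∀ i, Measurable (X i)) (hmY : ∀ j, Measurable (Y j))
    (hindep : iIndepFun (Sum.elim X Y) ℙ)
    (hX : ∀ i, Measure.map (X i) ℙ = expMeasure 1)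
    (hY : ∀ j, Measure.map (Y j) ℙ = expMeasure 1)
    (g : ℝ → ℝ) (hgm : Measurable g)
    (h3 : Integrable (fun ω => (g (X 0 ω * Y 0 ω)) ^ 2) ℙ)
    :
    Tendsto (fun n : ℕ => ∫ ω, (g (X 0 ω * Y 0 ω / (sampleMean X n ω * sampleMean Y n ω))) ^ 2 ∂ℙ)
        atTop (𝓝 (∫ ω, (g (X 0 ω * Y 0 ω)) ^ 2 ∂ℙ)) ∧
      (∫ ω, (g (X 0 ω * Y 0 ω)) ^ 2 ∂ℙ) =
        ∫ x in Set.Ioi (0 : ℝ), ∫ y in Set.Ioi (0 : ℝ),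
          (g (x * y)) ^ 2 * Real.exp (-x) * Real.exp (-y) := by
  have := isProbabilityMeasure_expMeasure one_pos
  set G : ℝ × ℝ → ℝ := fun p => g (p.1 * p.2) ^ 2
  have hGm : Measurable G := by fun_prop
  have hXY0 : Measurable fun ω => (X 0 ω, Y 0 ω) := (hmX 0).prodMk (hmY 0)
  have hpair : Measure.map (fun ω => (X 0 ω, Y 0 ω)) ℙ = (expMeasure 1).prod (expMeasure 1) := by
    simpa only [hX 0, hY 0] using (hindep.indepFun (i := .inl 0) (j := .inr 0) (by simp)
      ).map_prod_eq_prod_map_map (hmX 0).aemeasurable (hmY 0).aemeasurable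
  have hGint : Integrable G ((expMeasure 1).prod (expMeasure 1)) := by
    rw [← hpair]
    exact (integrable_map_measure hGm.aestronglyMeasurable hXY0.aemeasurable).2 h3
  have hlimit : ∫ ω, g (X 0 ω * Y 0 ω) ^ 2 ∂ℙ = ∫ p, G p ∂(expMeasure 1).prod (expMeasure 1) := by
    rw [← hpair, integral_map hXY0.aemeasurable hGm.aestronglyMeasurable]
  refine ⟨?_, ?_⟩
  · rw [hlimit]
    refine (tendsto_integral_prod_meanRatioMeasure hGm.aestronglyMeasurable hGint).congr'
      (eventually_atTop.2 ⟨2, fun n hn => ?_⟩)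
    simpa only [G, div_mul_div_comm] using
      (integral_comp_div_sampleMean hmX hmY hindep hX hY hGm hn).symm
  · rw [hlimit, integral_prod _ hGint, integral_expMeasure one_pos]
    refine setIntegral_congr_fun measurableSet_Ioi fun x _ => ?_
    rw [integral_expMeasure one_pos, ← integral_const_mul]
    refine setIntegral_congr_fun measurableSet_Ioi fun y _ => ?_
    simp only [G, one_mul]
    ring

/-- Formula (14): `E[g²(X₁Y₁/(X̄Ȳ))] → E[g²(X₁Y₁)] = ∫∫ g²(xy) e^(-x) e^(-y) dy dx`. -/
theorem lecam2d_formula14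
    {Ω : Type*} [MeasureSpace Ω] [IsProbabilityMeasure (ℙ : Measure Ω)]
    (X Y : ℕ → Ω → ℝ)
    (hmX : ∀ i, Measurable (X i)) (hmY : ∀ j, Measurable (Y j))
    (hindep : iIndepFun (Sum.elim X Y) ℙ)
    (hX : ∀ i, Measure.map (X i) ℙ = expMeasure 1)
    (hY : ∀ j, Measure.map (Y j) ℙ = expMeasure 1)
    (g : ℝ → ℝ) (hgm : Measurable g)
    (h2 : ContinuousOn g (Set.Ici 0))
    (h3 : Integrable (fun ω => (g (X 0 ω * Y 0 ω)) ^ 2) ℙ)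
    :
    Tendsto (fun n : ℕ => ∫ ω, (g (X 0 ω * Y 0 ω / (sampleMean X n ω * sampleMean Y n ω))) ^ 2 ∂ℙ)
        atTop (𝓝 (∫ ω, (g (X 0 ω * Y 0 ω)) ^ 2 ∂ℙ)) ∧
      (∫ ω, (g (X 0 ω * Y 0 ω)) ^ 2 ∂ℙ) =
        ∫ x in Set.Ioi (0 : ℝ), ∫ y in Set.Ioi (0 : ℝ),
          (g (x * y)) ^ 2 * Real.exp (-x) * Real.exp (-y) :=
  lecam2d_formula14_general X Y hmX hmY hindep hX hY g hgm h3
end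

section
/- There exists a constant C > 0 such that for all integers n ≥ 4 and all x ∈ [1, √n], |(1 − x/n)^{n−3} − e^{−x}(1 + (3x − x²/2)/n)| ≤ C n⁻² (x² + x⁴) e^{−x}. -/
/-!
Write `(1 - x/n)^(n-3) = e^{-x} e^δ` with `δ = (n-3) log(1 - x/n) + x`. The cubic Taylor bound
for `log (1 - u)` at `u = x/n ≤ 1/2` gives `δ = (3x - x²/2)/n + O((x² + x³)/n²)`. For
`1 ≤ x ≤ √n` both `δ` and `(3x - x²/2)/n` are bounded and `δ² = O((x² + x⁴)/n²)`, so
`e^δ - 1 - δ = O(δ²)` yields the claim after factoring out `e^{-x}`.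
-/

open Real

theorem Real.abs_exp_sub_one_sub_le_sq_mul_exp_abs (t : ℝ) :
    |exp t - 1 - t| ≤ t ^ 2 * exp |t| := by
  have h := Complex.norm_exp_sub_sum_le_norm_mul_exp (t : ℂ) 2
  norm_num [Finset.sum_range_succ, ← sub_sub] at h
  exact_mod_cast h

theorem Real.abs_log_one_sub_add_le {u : ℝ} (hu : |u| ≤ 1 / 2) :
    |log (1 - u) + u + u ^ 2 / 2| ≤ 2 * |u| ^ 3 := by
  have h : |u + u ^ 2 / 2 + log (1 - u)| ≤ |u| ^ 3 / (1 - |u|) := by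
    simpa [Finset.sum_range_succ, one_add_one_eq_two] using
      abs_log_sub_add_sum_range_le (hu.trans_lt (by norm_num)) 2
  rw [add_comm, ← add_assoc] at h
  refine h.trans ?_
  rw [div_le_iff₀ (by linarith)]
  nlinarith [pow_nonneg (abs_nonneg u) 3]

noncomputable def excessExponent (n : ℕ) (x : ℝ) : ℝ := (n - 3 : ℕ) * log (1 - x / n) + x

section
variable {n : ℕ} {x : ℝ}

theorem one_sub_div_pow_eq_exp_neg_mul_exp (hx : x / n < 1) :
    (1 - x / n) ^ (n - 3) = exp (-x) * exp (excessExponent n x) := by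
  rw [excessExponent, ← exp_add, add_comm _ x, neg_add_cancel_left, ← log_pow,
    exp_log (pow_pos (by linarith) _)]

theorem excessExponent_sub_eq (hn : 3 ≤ n) :
    excessExponent n x - (3 * x - x ^ 2 / 2) / n =
      (n - 3 : ℕ) * (log (1 - x / n) + x / n + (x / n) ^ 2 / 2) + 3 / 2 * x ^ 2 / n ^ 2 := by
  have hn0 : (n : ℝ) ≠ 0 := by positivity
  rw [excessExponent, Nat.cast_sub hn]
  field_simp
  ring

theorem abs_excessExponent_sub_le (hn : 3 ≤ n) (hx : 0 ≤ x) (h2x : 2 * x ≤ n) :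
    |excessExponent n x - (3 * x - x ^ 2 / 2) / n| ≤ (2 * x ^ 3 + 3 / 2 * x ^ 2) / n ^ 2 := by
  have hn0 : (0 : ℝ) < n := by positivity
  have hu : |x / n| ≤ 1 / 2 := by
    rw [abs_of_nonneg (by positivity), div_le_iff₀ hn0]; linarith
  have hm : |((n - 3 : ℕ) : ℝ)| ≤ n := by
    rw [Nat.abs_cast]; exact_mod_cast Nat.sub_le n 3
  rw [excessExponent_sub_eq hn]
  calc _ ≤ |((n - 3 : ℕ) : ℝ) * (log (1 - x / n) + x / n + (x / n) ^ 2 / 2)|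
          + |3 / 2 * x ^ 2 / n ^ 2| := abs_add_le _ _
    _ ≤ n * (2 * |x / n| ^ 3) + 3 / 2 * x ^ 2 / n ^ 2 := by
        rw [abs_mul, abs_of_nonneg (by positivity : (0 : ℝ) ≤ 3 / 2 * x ^ 2 / n ^ 2)]
        gcongr
        exact abs_log_one_sub_add_le hu
    _ = (2 * x ^ 3 + 3 / 2 * x ^ 2) / n ^ 2 := by
        rw [abs_of_nonneg (by positivity)]
        field_simp

theorem abs_exp_excessExponent_sub_le (hn : 4 ≤ n) (hx : 1 ≤ x) (hxn : x ^ 2 ≤ n) :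
    |exp (excessExponent n x) - 1 - (3 * x - x ^ 2 / 2) / n| ≤
      (2 + 42 * exp 6) * ((x ^ 2 + x ^ 4) / n ^ 2) := by
  set δ := excessExponent n x
  set a := (3 * x - x ^ 2 / 2) / n
  set P := (x ^ 2 + x ^ 4) / n ^ 2
  have hn4 : (4 : ℝ) ≤ n := by exact_mod_cast hn
  have hn0 : (0 : ℝ) < n := by linarith
  have hP : P ≤ 2 := by
    rw [div_le_iff₀ (by positivity)]; nlinarith
  have hδa : |δ - a| ≤ 2 * P := by
    refine (abs_excessExponent_sub_le (by omega) (by linarith) (by nlinarith)).trans ?_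
    rw [mul_div_assoc']
    gcongr
    nlinarith [pow_le_pow_right₀ hx (by norm_num : 3 ≤ 4)]
  have ha : |a| ≤ 2 := by
    rw [abs_div, abs_of_pos hn0, div_le_iff₀ hn0, abs_le]
    constructor <;> nlinarith
  have ha2 : a ^ 2 ≤ 13 * P := by
    rw [div_pow, mul_div_assoc', div_le_div_iff_of_pos_right (by positivity)]
    nlinarith
  have hδ : |δ| ≤ 6 := by linarith [abs_sub_abs_le_abs_sub δ a]
  have hδ2 : δ ^ 2 ≤ 42 * P := by
    nlinarith [sq_nonneg (δ - 2 * a), sq_abs (δ - a), abs_nonneg (δ - a)]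
  calc |exp δ - 1 - a| ≤ |exp δ - 1 - δ| + |δ - a| := by
        rw [show exp δ - 1 - a = (exp δ - 1 - δ) + (δ - a) by ring]; exact abs_add_le _ _
    _ ≤ 42 * P * exp 6 + 2 * P := by
        gcongr
        exact (abs_exp_sub_one_sub_le_sq_mul_exp_abs δ).trans (by gcongr)
    _ = (2 + 42 * exp 6) * P := by ring
end

/-- Uniform second-order Taylor expansion (22): there is `C > 0` such that for all `n ≥ 4`
and all `x ∈ [1, √n]`,
`|(1 − x/n)^(n−3) − e^(−x) (1 + (3x − x²/2)/n)| ≤ C n⁻² (x² + x⁴) e^(−x)`. -/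
theorem lecam2d_taylor_expansion :
    ∃ C : ℝ, 0 < C ∧ ∀ n : ℕ, 4 ≤ n → ∀ x : ℝ, x ∈ Set.Icc 1 (Real.sqrt n) →
      |(1 - x / n) ^ (n - 3) - Real.exp (-x) * (1 + (3 * x - x ^ 2 / 2) / n)| ≤
        C / (n : ℝ) ^ 2 * (x ^ 2 + x ^ 4) * Real.exp (-x) := by
  refine ⟨2 + 42 * exp 6, by positivity, fun n hn x ⟨hx1, hxs⟩ => ?_⟩
  have hxn : x ^ 2 ≤ n := (le_sqrt (by linarith) (Nat.cast_nonneg n)).mp hxs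
  have hn4 : (4 : ℝ) ≤ n := by exact_mod_cast hn
  have hx_lt : x / n < 1 := by rw [div_lt_one (by linarith)]; nlinarith
  rw [one_sub_div_pow_eq_exp_neg_mul_exp hx_lt, ← mul_sub, abs_mul, abs_of_pos (exp_pos _),
    ← sub_sub]
  calc exp (-x) * |exp (excessExponent n x) - 1 - (3 * x - x ^ 2 / 2) / n|
      ≤ exp (-x) * ((2 + 42 * exp 6) * ((x ^ 2 + x ^ 4) / n ^ 2)) := by
        gcongr
        exact abs_exp_excessExponent_sub_le hn hx1 hxn
    _ = (2 + 42 * exp 6) / (n : ℝ) ^ 2 * (x ^ 2 + x ^ 4) * exp (-x) := by ring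
end

section
/- There exists N such that for all integers n ≥ N and all x ∈ [4 log n, n], (1 − x/n)^{n−3} < e^{−x}. -/
open Real

/-- Key pointwise bound: for `t ∈ [0,1]`, `1 - t ≤ exp (-(t + t^2/4))`. -/
lemma lecam2d_key (t : ℝ) (ht0 : 0 ≤ t) (ht1 : t ≤ 1) :
    1 - t ≤ Real.exp (-(t + t ^ 2 / 4)) := by
  have habs : |(-t)| ≤ 1 := by rw [abs_neg, abs_of_nonneg ht0]; exact ht1
  have h1 := Real.exp_bound habs (by norm_num : 0 < 3)
  have hsum : ∑ i ∈ Finset.range 3, (-t) ^ i / (Nat.factorial i : ℝ)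
      = 1 - t + t ^ 2 / 2 := by
    simp [Finset.sum_range_succ, Nat.factorial]
    ring
  rw [hsum] at h1
  replace h1 : |Real.exp (-t) - (1 - t + t ^ 2 / 2)| ≤ t ^ 3 * (2 / 9) := by
    refine h1.trans_eq ?_
    rw [abs_neg, abs_of_nonneg ht0]
    push_cast
    norm_num [Nat.factorial]
  have hexp1 : 1 - t + t ^ 2 / 2 - t ^ 3 * (2 / 9) ≤ Real.exp (-t) := by
    have := abs_le.mp h1
    linarith [this.1]
  have hexp2 : 1 - t ^ 2 / 4 ≤ Real.exp (-(t ^ 2 / 4)) := by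
    have := Real.add_one_le_exp (-(t ^ 2 / 4))
    linarith
  have hsplit : Real.exp (-(t + t ^ 2 / 4)) = Real.exp (-t) * Real.exp (-(t ^ 2 / 4)) := by
    rw [← Real.exp_add]; ring_nf
  rw [hsplit]
  have hpos1 : (0:ℝ) ≤ 1 - t + t ^ 2 / 2 - t ^ 3 * (2 / 9) := by nlinarith
  have hmid : 1 - t ≤ (1 - t + t ^ 2 / 2 - t ^ 3 * (2 / 9)) * (1 - t ^ 2 / 4) := by
    nlinarith [pow_nonneg ht0 3, pow_nonneg ht0 5,
      mul_nonneg (sq_nonneg t) (show (0:ℝ) ≤ 1 - t ^ 2 by nlinarith)]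
  calc 1 - t ≤ (1 - t + t ^ 2 / 2 - t ^ 3 * (2 / 9)) * (1 - t ^ 2 / 4) := hmid
    _ ≤ Real.exp (-t) * Real.exp (-(t ^ 2 / 4)) := by
        apply mul_le_mul hexp1 hexp2 (by nlinarith) (le_of_lt (Real.exp_pos _))

/-- Inequality (23): for `n` large enough, `(1 − x/n)^(n−3) < e^(−x)` for all
`x ∈ [4 log n, n]`. -/
theorem lecam2d_tail_inequality :
    ∃ N : ℕ, ∀ n : ℕ, N ≤ n → ∀ x : ℝ, x ∈ Set.Icc (4 * Real.log n) (n : ℝ) →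
      (1 - x / n) ^ (n - 3) < Real.exp (-x) := by
  use 55
  intro n hn x hx
  obtain ⟨hx1, hx2⟩ := hx
  have hn0 : (0:ℝ) < n := by
    have : (55:ℝ) ≤ n := by exact_mod_cast hn
    linarith
  -- log n ≥ 4
  have hexp4 : Real.exp 4 ≤ (n : ℝ) := by
    have h1 : Real.exp 1 < 2.7182818286 := Real.exp_one_lt_d9
    have h4 : Real.exp 4 = (Real.exp 1) ^ 4 := by
      rw [← Real.exp_nat_mul]; norm_num
    have hpos : (0:ℝ) < Real.exp 1 := Real.exp_pos 1
    have : Real.exp 4 < 2.7182818286 ^ 4 := by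
      rw [h4]; exact pow_lt_pow_left₀ h1 (le_of_lt hpos) (by norm_num)
    have h55 : (2.7182818286 : ℝ) ^ 4 < 55 := by norm_num
    have hn55 : (55:ℝ) ≤ n := by exact_mod_cast hn
    linarith
  have hlog : (4:ℝ) ≤ Real.log n := (Real.le_log_iff_exp_le hn0).mpr hexp4
  have hx16 : (16:ℝ) ≤ x := by linarith
  set t : ℝ := x / n with ht_def
  have ht0 : 0 < t := div_pos (by linarith) hn0
  have ht1 : t ≤ 1 := (div_le_one hn0).mpr hx2
  have hxt : x = (n : ℝ) * t := by rw [ht_def]; field_simp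
  have hm : ((n - 3 : ℕ) : ℝ) = (n : ℝ) - 3 := by
    exact_mod_cast Nat.cast_sub (by omega : 3 ≤ n)
  have hstep1 : (1 - t) ^ (n - 3) ≤ Real.exp (-(t + t ^ 2 / 4)) ^ (n - 3) :=
    pow_le_pow_left₀ (by linarith) (lecam2d_key t (le_of_lt ht0) ht1) _
  have hstep2 : Real.exp (-(t + t ^ 2 / 4)) ^ (n - 3)
      = Real.exp (((n : ℝ) - 3) * (-(t + t ^ 2 / 4))) := by
    rw [← Real.exp_nat_mul, hm]
  have hstep3 : ((n : ℝ) - 3) * (-(t + t ^ 2 / 4)) < -x := by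
    have hn55 : (55:ℝ) ≤ n := by exact_mod_cast hn
    rw [hxt]
    have key : (n : ℝ) * t ^ 2 / 4 > 3 * t + 3 * t ^ 2 / 4 := by
      have h1 : (n : ℝ) * t ^ 2 = x * t := by rw [hxt]; ring
      nlinarith [mul_lt_mul_of_pos_right (show (15:ℝ) < x by linarith) ht0]
    nlinarith
  calc (1 - x / n) ^ (n - 3) ≤ Real.exp (-(t + t ^ 2 / 4)) ^ (n - 3) := hstep1
    _ = Real.exp (((n : ℝ) - 3) * (-(t + t ^ 2 / 4))) := hstep2
    _ < Real.exp (-x) := Real.exp_lt_exp.mpr hstep3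
end

section
/- Define Eₙ = ∫₀^∞ ∫₀^∞ [ ( (1 − x/n)⁺ (1 − y/n)⁺ )^{n−3} − e^{−x} e^{−y} (1 + (3x − x²/2)/n)(1 + (3y − y²/2)/n) ]² eˣ eʸ dy dx, where z⁺ = max(z, 0). Then Eₙ = O(n⁻⁴) as n → ∞, i.e. there exist C > 0 and N such that Eₙ ≤ C n⁻⁴ for all n ≥ N. -/
open MeasureTheory Real

noncomputable def fE (n : ℕ) (x : ℝ) : ℝ := max (1 - x / n) 0 ^ (n - 3)
noncomputable def gE (n : ℕ) (x : ℝ) : ℝ := Real.exp (-x) * (1 + (3 * x - x ^ 2 / 2) / n)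

lemma one_add_le (x : ℝ) (hx : 0 ≤ x) : 1 + x ≤ 1024 * Real.exp (x / 32) := by
  have h1 := Real.add_one_le_exp (x / 64)
  have h2 : Real.exp (x / 32) = Real.exp (x / 64) ^ 2 := by
    rw [← Real.exp_nat_mul]; norm_num; ring
  rw [h2]; nlinarith [Real.exp_pos (x / 64)]

lemma pow8_le (x : ℝ) (hx : 0 ≤ x) : (1 + x) ^ 8 ≤ 1024 ^ 8 * Real.exp (x / 4) := by
  have h := pow_le_pow_left₀ (by linarith : (0:ℝ) ≤ 1 + x) (one_add_le x hx) 8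
  calc (1 + x) ^ 8 ≤ (1024 * Real.exp (x / 32)) ^ 8 := h
    _ = 1024 ^ 8 * Real.exp (x / 4) := by
        rw [mul_pow, ← Real.exp_nat_mul]; norm_num; ring

lemma pow4_le (x : ℝ) (hx : 0 ≤ x) : (1 + x) ^ 4 ≤ 1024 ^ 4 * Real.exp (x / 8) := by
  have h := pow_le_pow_left₀ (by linarith : (0:ℝ) ≤ 1 + x) (one_add_le x hx) 4
  calc (1 + x) ^ 4 ≤ (1024 * Real.exp (x / 32)) ^ 4 := h
    _ = 1024 ^ 4 * Real.exp (x / 8) := by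
        rw [mul_pow, ← Real.exp_nat_mul]; norm_num; ring

lemma fE_nonneg (n : ℕ) (x : ℝ) : 0 ≤ fE n x := pow_nonneg (le_max_right _ 0) _

lemma fE_le {n : ℕ} (hn : 12 ≤ n) {x : ℝ} (hx : 0 ≤ x) :
    fE n x ≤ Real.exp (-(3 / 4) * x) := by
  have hN : (12 : ℝ) ≤ n := by exact_mod_cast hn
  have hN0 : (0 : ℝ) < n := by linarith
  unfold fE
  rcases lt_or_ge x n with hxn | hxn
  · have hb : 0 < 1 - x / (n : ℝ) := by
      rw [sub_pos, div_lt_one hN0]; exact hxn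
    rw [max_eq_left hb.le]
    have hrw : (1 - x / (n:ℝ)) ^ (n - 3) = Real.exp ((n - 3 : ℕ) * Real.log (1 - x / n)) := by
      rw [← Real.log_pow, Real.exp_log (pow_pos hb _)]
    rw [hrw, Real.exp_le_exp]
    have hlog : Real.log (1 - x / n) ≤ -(x / n) := by
      have := Real.log_le_sub_one_of_pos hb
      linarith
    have hxn0 : 0 ≤ x / (n:ℝ) := by positivity
    have hlog0 : Real.log (1 - x / n) ≤ 0 := by linarith
    have hc : ((n - 3 : ℕ) : ℝ) = (n : ℝ) - 3 := by
      have h3 : 3 ≤ n := by omega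
      push_cast [Nat.cast_sub h3]; ring
    rw [hc]
    have h1 : ((n:ℝ) - 3) * Real.log (1 - x / n) ≤ ((n:ℝ) - 3) * (-(x / n)) :=
      mul_le_mul_of_nonneg_left hlog (by linarith)
    calc ((n:ℝ) - 3) * Real.log (1 - x / n) ≤ ((n:ℝ) - 3) * (-(x / n)) := h1
      _ ≤ -(3/4) * x := by
          rw [div_eq_mul_inv]
          have hn4 : (3 : ℝ) / 4 * (n:ℝ) ≤ (n:ℝ) - 3 := by linarith
          have : ((n:ℝ) - 3) * (x * (n:ℝ)⁻¹) ≥ 3/4 * (n:ℝ) * (x * (n:ℝ)⁻¹) :=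
            mul_le_mul_of_nonneg_right hn4 (by positivity)
          have he : 3/4 * (n:ℝ) * (x * (n:ℝ)⁻¹) = 3/4 * x := by
            field_simp
          nlinarith
  · have hb : 1 - x / (n : ℝ) ≤ 0 := by
      rw [sub_nonpos, le_div_iff₀ hN0]; nlinarith
    rw [max_eq_right hb]
    rw [zero_pow (by omega : n - 3 ≠ 0)]
    positivity
lemma exp_approx {s ε : ℝ} (hs : |s| ≤ 13 / 20) (hε : |ε| ≤ 1 / 4) :
    |Real.exp (s + ε) - 1 - s| ≤ 2 * s ^ 2 + 2 * |ε| := by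
  have hw : |s + ε| ≤ 1 := by
    calc |s + ε| ≤ |s| + |ε| := abs_add_le _ _
      _ ≤ 1 := by linarith
  have hexp := Real.abs_exp_sub_one_sub_id_le hw
  have htri : |Real.exp (s + ε) - 1 - s| ≤ |Real.exp (s + ε) - 1 - (s + ε)| + |ε| := by
    rw [show Real.exp (s + ε) - 1 - s = (Real.exp (s + ε) - 1 - (s + ε)) + ε by ring]
    exact abs_add_le _ _
  have hw2 : (s + ε) ^ 2 ≤ 2 * s ^ 2 + 2 * ε ^ 2 := by nlinarith [sq_nonneg (s - ε)]
  have hε2 : ε ^ 2 ≤ |ε| / 2 := by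
    have h2 : |ε| * |ε| ≤ 1 / 4 * |ε| := mul_le_mul_of_nonneg_right hε (abs_nonneg ε)
    have h3 : ε ^ 2 = |ε| * |ε| := by rw [abs_mul_abs_self]; ring
    have h4 := abs_nonneg ε
    linarith
  linarith

set_option maxHeartbeats 1000000 in
lemma fg_close {n : ℕ} (hn : 400 ≤ n) {x : ℝ} (hx : 0 ≤ x) (hx2 : x ^ 2 ≤ (n : ℝ)) :
    |fE n x - gE n x| ≤ 100 * (1 + x) ^ 4 * Real.exp (-x) / (n : ℝ) ^ 2 := by
  have hN : (400 : ℝ) ≤ n := by exact_mod_cast hn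
  have hN0 : (0 : ℝ) < n := by linarith
  have hxN : x ≤ (n : ℝ) / 20 := by nlinarith
  obtain ⟨u, hu⟩ : ∃ t : ℝ, t = x / (n : ℝ) := ⟨_, rfl⟩
  have hu0 : 0 ≤ u := by rw [hu]; positivity
  have hu20 : u ≤ 1 / 20 := by rw [hu, div_le_iff₀ hN0]; nlinarith
  have hb : (0 : ℝ) < 1 - u := by linarith
  have hu3 : u ^ 3 ≤ x ^ 3 / (n : ℝ) ^ 3 := by rw [hu, div_pow]
  -- log expansion
  have hlog := Real.abs_log_sub_add_sum_range_le (x := u)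
    (by rw [abs_of_nonneg hu0]; linarith) 2
  have hsum : (∑ i ∈ Finset.range 2, u ^ (i + 1) / (i + 1)) = u + u ^ 2 / 2 := by
    norm_num [Finset.sum_range_succ]
  rw [hsum, abs_of_nonneg hu0] at hlog
  obtain ⟨ρ, hρdef⟩ : ∃ t : ℝ, t = Real.log (1 - u) + (u + u ^ 2 / 2) := ⟨_, rfl⟩
  have hρb : |ρ| ≤ 2 * u ^ 3 := by
    have h1 : |ρ| ≤ u ^ 3 / (1 - u) := by
      rw [hρdef, show Real.log (1 - u) + (u + u ^ 2 / 2)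
            = u + u ^ 2 / 2 + Real.log (1 - u) by ring]
      exact hlog
    have h2 : u ^ 3 / (1 - u) ≤ 2 * u ^ 3 := by
      rw [div_le_iff₀ hb]
      nlinarith [mul_nonneg (pow_nonneg hu0 3) (by linarith : (0:ℝ) ≤ 1 - 2 * u)]
    linarith
  have hm : ((n - 3 : ℕ) : ℝ) = (n : ℝ) - 3 := by
    have h3 : 3 ≤ n := by omega
    rw [Nat.cast_sub h3]; norm_num
  have hf : fE n x = Real.exp (((n - 3 : ℕ) : ℝ) * Real.log (1 - u)) := by
    unfold fE
    rw [← hu, max_eq_left hb.le, ← Real.log_pow, Real.exp_log (pow_pos hb _)]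
  obtain ⟨s, hs⟩ : ∃ t : ℝ, t = (3 * x - x ^ 2 / 2) / (n : ℝ) := ⟨_, rfl⟩
  obtain ⟨ε, hε⟩ : ∃ t : ℝ,
      t = 3 * x ^ 2 / (2 * (n : ℝ) ^ 2) + ((n : ℝ) - 3) * ρ := ⟨_, rfl⟩
  have hmL : ((n - 3 : ℕ) : ℝ) * Real.log (1 - u) = -x + (s + ε) := by
    have hL : Real.log (1 - u) = ρ - u - u ^ 2 / 2 := by rw [hρdef]; ring
    rw [hm, hL, hs, hε, hu]
    field_simp
    ring
  -- bounds on ε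
  have hεb : |ε| ≤ (3 / 2 * x ^ 2 + 2 * x ^ 3) / (n : ℝ) ^ 2 := by
    have h1 : |ε| ≤ 3 * x ^ 2 / (2 * (n : ℝ) ^ 2) + ((n : ℝ) - 3) * |ρ| := by
      rw [hε]
      refine le_trans (abs_add_le _ _) ?_
      rw [abs_of_nonneg (by positivity), abs_mul,
        abs_of_nonneg (by linarith : (0:ℝ) ≤ (n : ℝ) - 3)]
    have h2 : ((n : ℝ) - 3) * |ρ| ≤ (n : ℝ) * (2 * x ^ 3 / (n : ℝ) ^ 3) := by
      have h5 : ((n : ℝ) - 3) * |ρ| ≤ (n : ℝ) * |ρ| :=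
        mul_le_mul_of_nonneg_right (by linarith) (abs_nonneg ρ)
      have h6 : (n : ℝ) * |ρ| ≤ (n : ℝ) * (2 * x ^ 3 / (n : ℝ) ^ 3) := by
        refine mul_le_mul_of_nonneg_left ?_ hN0.le
        calc |ρ| ≤ 2 * u ^ 3 := hρb
          _ ≤ 2 * (x ^ 3 / (n : ℝ) ^ 3) := by linarith
          _ = 2 * x ^ 3 / (n : ℝ) ^ 3 := by ring
      linarith
    have h3 : 3 * x ^ 2 / (2 * (n : ℝ) ^ 2) + (n : ℝ) * (2 * x ^ 3 / (n : ℝ) ^ 3)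
        = (3 / 2 * x ^ 2 + 2 * x ^ 3) / (n : ℝ) ^ 2 := by
      field_simp
    linarith
  have hx3 : x ^ 3 ≤ (n : ℝ) ^ 2 / 20 := by
    have h := mul_le_mul hxN hx2 (sq_nonneg x) (by positivity : (0:ℝ) ≤ (n : ℝ) / 20)
    calc x ^ 3 = x * x ^ 2 := by ring
      _ ≤ (n : ℝ) / 20 * n := h
      _ = (n : ℝ) ^ 2 / 20 := by ring
  have hεnum : |ε| ≤ 1 / 4 := by
    refine le_trans hεb ?_
    rw [div_le_iff₀ (by positivity)]
    nlinarith
  -- bounds on s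
  have hsnum : |s| ≤ 13 / 20 := by
    rw [hs, abs_div, abs_of_nonneg hN0.le, div_le_iff₀ hN0]
    rw [abs_le]; constructor <;> nlinarith
  have hkey := exp_approx hsnum hεnum
  -- assemble
  have hfg : fE n x - gE n x = Real.exp (-x) * (Real.exp (s + ε) - 1 - s) := by
    rw [hf, hmL, gE, Real.exp_add, ← hs]
    ring
  rw [hfg, abs_mul, abs_of_nonneg (Real.exp_pos _).le]
  have hs2 : s ^ 2 ≤ 9 * (1 + x) ^ 4 / (n : ℝ) ^ 2 := by
    rw [hs, div_pow]
    have hpoly : (3 * x - x ^ 2 / 2) ^ 2 ≤ 9 * (1 + x) ^ 4 := by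
      nlinarith [sq_nonneg x, pow_nonneg hx 3, pow_nonneg hx 4]
    gcongr
  have hεpoly : |ε| ≤ 2 * (1 + x) ^ 4 / (n : ℝ) ^ 2 := by
    refine le_trans hεb ?_
    have hpoly : 3 / 2 * x ^ 2 + 2 * x ^ 3 ≤ 2 * (1 + x) ^ 4 := by
      nlinarith [sq_nonneg x, pow_nonneg hx 3, pow_nonneg hx 4]
    gcongr
  calc Real.exp (-x) * |Real.exp (s + ε) - 1 - s|
      ≤ Real.exp (-x) * (2 * s ^ 2 + 2 * |ε|) :=
        mul_le_mul_of_nonneg_left hkey (Real.exp_pos _).le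
    _ ≤ Real.exp (-x) * (22 * (1 + x) ^ 4 / (n : ℝ) ^ 2) := by
        refine mul_le_mul_of_nonneg_left ?_ (Real.exp_pos _).le
        calc 2 * s ^ 2 + 2 * |ε|
            ≤ 2 * (9 * (1 + x) ^ 4 / (n : ℝ) ^ 2) + 2 * (2 * (1 + x) ^ 4 / (n : ℝ) ^ 2) := by
              linarith
          _ = 22 * (1 + x) ^ 4 / (n : ℝ) ^ 2 := by ring
    _ = 22 * (1 + x) ^ 4 * Real.exp (-x) / (n : ℝ) ^ 2 := by ring
    _ ≤ 100 * (1 + x) ^ 4 * Real.exp (-x) / (n : ℝ) ^ 2 := by gcongr <;> norm_num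
lemma exp_half (x : ℝ) : Real.exp (-(3/4) * x) ^ 2 * Real.exp x = Real.exp (-(1/2) * x) := by
  rw [pow_two, ← Real.exp_add, ← Real.exp_add]; congr 1; ring

lemma exp_neg_sq (x : ℝ) : Real.exp (-x) ^ 2 * Real.exp x = Real.exp (-x) := by
  rw [pow_two, ← Real.exp_add, ← Real.exp_add]; congr 1; ring

lemma psi_le {n : ℕ} (hn : 12 ≤ n) {x : ℝ} (hx : 0 ≤ x) :
    fE n x ^ 2 * Real.exp x ≤ Real.exp (-(1/2) * x) := by
  have h := fE_le hn hx
  calc fE n x ^ 2 * Real.exp x ≤ Real.exp (-(3/4) * x) ^ 2 * Real.exp x :=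
        mul_le_mul_of_nonneg_right (pow_le_pow_left₀ (fE_nonneg n x) h 2) (Real.exp_pos _).le
    _ = Real.exp (-(1/2) * x) := exp_half x

lemma chi_le {n : ℕ} (hn : 1 ≤ n) {x : ℝ} (hx : 0 ≤ x) :
    gE n x ^ 2 * Real.exp x ≤ 9 * 1024 ^ 4 * Real.exp (-(1/2) * x) := by
  have hN1 : (1 : ℝ) ≤ n := by exact_mod_cast hn
  have hN0 : (0 : ℝ) < n := by linarith
  set p : ℝ := (3 * x - x ^ 2 / 2) / (n : ℝ) with hp
  have habs : |p| ≤ 3 * x + x ^ 2 / 2 := by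
    rw [hp, abs_div, abs_of_nonneg hN0.le]
    have h1 : |3 * x - x ^ 2 / 2| ≤ 3 * x + x ^ 2 / 2 :=
      abs_le.2 ⟨by nlinarith, by nlinarith⟩
    calc |3 * x - x ^ 2 / 2| / (n : ℝ) ≤ |3 * x - x ^ 2 / 2| / 1 := by
          apply div_le_div_of_nonneg_left (abs_nonneg _) (by norm_num) hN1
      _ = |3 * x - x ^ 2 / 2| := by rw [div_one]
      _ ≤ 3 * x + x ^ 2 / 2 := h1
  obtain ⟨hp1, hp2⟩ := abs_le.1 habs
  have hsq : (1 + p) ^ 2 ≤ 9 * (1 + x) ^ 4 := by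
    have h2 : (1 + p) ^ 2 ≤ (1 + (3 * x + x ^ 2 / 2)) ^ 2 := by
      nlinarith [mul_nonneg (by linarith : (0:ℝ) ≤ 3 * x + x ^ 2 / 2 - p)
        (by linarith : (0:ℝ) ≤ 2 + (3 * x + x ^ 2 / 2) + p)]
    have h3 : (1 + (3 * x + x ^ 2 / 2)) ^ 2 ≤ 9 * (1 + x) ^ 4 := by
      nlinarith [sq_nonneg x, pow_nonneg hx 3, pow_nonneg hx 4]
    linarith
  have hval : gE n x ^ 2 * Real.exp x = (1 + p) ^ 2 * Real.exp (-x) := by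
    rw [gE, ← hp, mul_pow]
    rw [show Real.exp (-x) ^ 2 * (1 + p) ^ 2 * Real.exp x
        = (1 + p) ^ 2 * (Real.exp (-x) ^ 2 * Real.exp x) by ring, exp_neg_sq]
  rw [hval]
  calc (1 + p) ^ 2 * Real.exp (-x) ≤ 9 * (1 + x) ^ 4 * Real.exp (-x) :=
        mul_le_mul_of_nonneg_right hsq (Real.exp_pos _).le
    _ ≤ 9 * (1024 ^ 4 * Real.exp (x / 8)) * Real.exp (-x) := by
        have := pow4_le x hx
        have he := (Real.exp_pos (-x)).le
        nlinarith [Real.exp_pos (x / 8)]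
    _ = 9 * 1024 ^ 4 * Real.exp (x / 8 + -x) := by rw [Real.exp_add]; ring
    _ ≤ 9 * 1024 ^ 4 * Real.exp (-(1/2) * x) := by
        have : x / 8 + -x ≤ -(1/2) * x := by linarith
        have := Real.exp_le_exp.2 this
        nlinarith

lemma exp_quarter_le {n : ℕ} (hn : 1 ≤ n) {x : ℝ} (hx : 0 ≤ x) (hc : (n : ℝ) ≤ x ^ 2) :
    Real.exp (-(1/4) * x) ≤ 32 ^ 8 / (n : ℝ) ^ 4 := by
  have hN0 : (0 : ℝ) < n := by exact_mod_cast hn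
  have h8 : (n : ℝ) ^ 4 / 32 ^ 8 ≤ Real.exp ((1/4) * x) := by
    have h0 : x / 32 ≤ Real.exp (x / 32) - 1 := by linarith [Real.add_one_le_exp (x / 32)]
    have h1 : (x / 32) ^ 8 ≤ Real.exp (x / 32) ^ 8 := by
      apply pow_le_pow_left₀ (by positivity)
      linarith [Real.exp_pos (x / 32)]
    have h2 : Real.exp (x / 32) ^ 8 = Real.exp ((1/4) * x) := by
      rw [← Real.exp_nat_mul]; congr 1; ring
    have h3 : (n : ℝ) ^ 4 ≤ (x ^ 2) ^ 4 := pow_le_pow_left₀ hN0.le hc 4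
    have h4 : (x / 32) ^ 8 = (x ^ 2) ^ 4 / 32 ^ 8 := by ring
    calc (n : ℝ) ^ 4 / 32 ^ 8 ≤ (x ^ 2) ^ 4 / 32 ^ 8 := by gcongr
      _ = (x / 32) ^ 8 := by ring
      _ ≤ Real.exp (x / 32) ^ 8 := h1
      _ = Real.exp ((1/4) * x) := h2
  have hpos : (0 : ℝ) < (n : ℝ) ^ 4 / 32 ^ 8 := by positivity
  have := one_div_le_one_div_of_le hpos h8
  rw [one_div_div] at this
  rw [show -(1/4) * x = -((1/4) * x) by ring, Real.exp_neg, inv_eq_one_div]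
  exact this

lemma phi_le {n : ℕ} (hn : 400 ≤ n) {x : ℝ} (hx : 0 ≤ x) :
    (fE n x - gE n x) ^ 2 * Real.exp x
      ≤ 10 ^ 5 * 1024 ^ 8 * Real.exp (-(1/4) * x) / (n : ℝ) ^ 4 := by
  have hn12 : 12 ≤ n := by omega
  have hn1 : 1 ≤ n := by omega
  have hN0 : (0 : ℝ) < n := by exact_mod_cast (by omega : 0 < n)
  rcases le_or_gt (x ^ 2) (n : ℝ) with hc | hc
  · have h := fg_close hn hx hc
    have h2 : (fE n x - gE n x) ^ 2 ≤ (100 * (1 + x) ^ 4 * Real.exp (-x) / (n : ℝ) ^ 2) ^ 2 := by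
      rw [← sq_abs (fE n x - gE n x)]
      exact pow_le_pow_left₀ (abs_nonneg _) h 2
    calc (fE n x - gE n x) ^ 2 * Real.exp x
        ≤ (100 * (1 + x) ^ 4 * Real.exp (-x) / (n : ℝ) ^ 2) ^ 2 * Real.exp x :=
          mul_le_mul_of_nonneg_right h2 (Real.exp_pos _).le
      _ = 10 ^ 4 * (1 + x) ^ 8 * (Real.exp (-x) ^ 2 * Real.exp x) / (n : ℝ) ^ 4 := by ring
      _ = 10 ^ 4 * (1 + x) ^ 8 * Real.exp (-x) / (n : ℝ) ^ 4 := by rw [exp_neg_sq]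
      _ ≤ 10 ^ 4 * (1024 ^ 8 * Real.exp (x / 4)) * Real.exp (-x) / (n : ℝ) ^ 4 := by
          gcongr
          exact pow8_le x hx
      _ = 10 ^ 4 * 1024 ^ 8 * Real.exp (x / 4 + -x) / (n : ℝ) ^ 4 := by
          rw [Real.exp_add]; ring
      _ ≤ 10 ^ 4 * 1024 ^ 8 * Real.exp (-(1/4) * x) / (n : ℝ) ^ 4 := by
          have h5 := Real.exp_le_exp.2 (show x / 4 + -x ≤ -(1/4) * x by linarith)
          gcongr
      _ ≤ 10 ^ 5 * 1024 ^ 8 * Real.exp (-(1/4) * x) / (n : ℝ) ^ 4 := by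
          gcongr ?_ * _ / _
          norm_num
  · have hψ := psi_le hn12 hx
    have hχ := chi_le hn1 hx
    have hdecay := exp_quarter_le hn1 hx hc.le
    have hsplit : Real.exp (-(1/2) * x) = Real.exp (-(1/4) * x) * Real.exp (-(1/4) * x) := by
      rw [← Real.exp_add]; congr 1; ring
    have h1 : (fE n x - gE n x) ^ 2 * Real.exp x
        ≤ 2 * (fE n x ^ 2 * Real.exp x) + 2 * (gE n x ^ 2 * Real.exp x) := by
      nlinarith [sq_nonneg (fE n x + gE n x), Real.exp_pos x,
        mul_le_mul_of_nonneg_right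
          (show (fE n x - gE n x) ^ 2 ≤ 2 * fE n x ^ 2 + 2 * gE n x ^ 2 by
            nlinarith [sq_nonneg (fE n x + gE n x)]) (Real.exp_pos x).le]
    have h2 : (fE n x - gE n x) ^ 2 * Real.exp x
        ≤ (2 + 2 * (9 * 1024 ^ 4)) * Real.exp (-(1/2) * x) := by
      nlinarith [Real.exp_pos (-(1/2) * x)]
    calc (fE n x - gE n x) ^ 2 * Real.exp x
        ≤ (2 + 2 * (9 * 1024 ^ 4)) * (Real.exp (-(1/4) * x) * Real.exp (-(1/4) * x)) := by
          rw [← hsplit]; exact h2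
      _ ≤ (2 + 2 * (9 * 1024 ^ 4)) * ((32 ^ 8 / (n : ℝ) ^ 4) * Real.exp (-(1/4) * x)) := by
          have he := (Real.exp_pos (-(1/4) * x)).le
          gcongr
      _ = (2 + 2 * (9 * 1024 ^ 4)) * 32 ^ 8 * Real.exp (-(1/4) * x) / (n : ℝ) ^ 4 := by
          ring
      _ ≤ 10 ^ 5 * 1024 ^ 8 * Real.exp (-(1/4) * x) / (n : ℝ) ^ 4 := by
          gcongr ?_ * _ / _
          norm_num
noncomputable def phiE (n : ℕ) (x : ℝ) : ℝ := (fE n x - gE n x) ^ 2 * Real.exp x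
noncomputable def psiE (n : ℕ) (x : ℝ) : ℝ := fE n x ^ 2 * Real.exp x
noncomputable def chiE (n : ℕ) (x : ℝ) : ℝ := gE n x ^ 2 * Real.exp x
noncomputable def IQ : ℝ := ∫ x in Set.Ioi (0 : ℝ), Real.exp (-(1/4) * x)
noncomputable def JP (n : ℕ) : ℝ := ∫ x in Set.Ioi (0 : ℝ), phiE n x
noncomputable def JS (n : ℕ) : ℝ := ∫ x in Set.Ioi (0 : ℝ), psiE n x
noncomputable def JC (n : ℕ) : ℝ := ∫ x in Set.Ioi (0 : ℝ), chiE n x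

lemma fE_cont (n : ℕ) : Continuous (fE n) := by
  unfold fE
  exact ((continuous_const.sub (continuous_id.div_const _)).max continuous_const).pow _

lemma gE_cont (n : ℕ) : Continuous (gE n) := by unfold gE; fun_prop

lemma phiE_nonneg (n : ℕ) (x : ℝ) : 0 ≤ phiE n x := by unfold phiE; positivity
lemma psiE_nonneg (n : ℕ) (x : ℝ) : 0 ≤ psiE n x := by unfold psiE; positivity
lemma chiE_nonneg (n : ℕ) (x : ℝ) : 0 ≤ chiE n x := by unfold chiE; positivity

lemma IQ_int : IntegrableOn (fun x : ℝ => Real.exp (-(1/4) * x)) (Set.Ioi 0) := by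
  simpa using exp_neg_integrableOn_Ioi 0 (show (0:ℝ) < 1/4 by norm_num)

lemma IQ_nonneg : 0 ≤ IQ :=
  setIntegral_nonneg measurableSet_Ioi fun x _ => (Real.exp_pos _).le

lemma integrableOn_of_le {f : ℝ → ℝ} (hf : Continuous f) {g : ℝ → ℝ}
    (hg : IntegrableOn g (Set.Ioi 0)) (h0 : ∀ x ∈ Set.Ioi (0:ℝ), 0 ≤ f x)
    (hle : ∀ x ∈ Set.Ioi (0:ℝ), f x ≤ g x) : IntegrableOn f (Set.Ioi 0) := by
  refine hg.mono' hf.aestronglyMeasurable.restrict ?_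
  filter_upwards [ae_restrict_mem measurableSet_Ioi] with x hx
  rw [Real.norm_eq_abs, abs_of_nonneg (h0 x hx)]
  exact hle x hx

lemma psiE_ptle {n : ℕ} (hn : 12 ≤ n) {x : ℝ} (hx : x ∈ Set.Ioi (0:ℝ)) :
    psiE n x ≤ Real.exp (-(1/4) * x) := by
  have hx0 : (0:ℝ) ≤ x := le_of_lt hx
  refine le_trans (psi_le hn hx0) (Real.exp_le_exp.2 (by linarith))

lemma chiE_ptle {n : ℕ} (hn : 1 ≤ n) {x : ℝ} (hx : x ∈ Set.Ioi (0:ℝ)) :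
    chiE n x ≤ 9 * 1024 ^ 4 * Real.exp (-(1/4) * x) := by
  have hx0 : (0:ℝ) ≤ x := le_of_lt hx
  refine le_trans (chi_le hn hx0) ?_
  have := Real.exp_le_exp.2 (show -(1/2) * x ≤ -(1/4) * x by linarith)
  nlinarith

lemma phiE_ptle {n : ℕ} (hn : 400 ≤ n) {x : ℝ} (hx : x ∈ Set.Ioi (0:ℝ)) :
    phiE n x ≤ (10 ^ 5 * 1024 ^ 8 / (n : ℝ) ^ 4) * Real.exp (-(1/4) * x) := by
  have hx0 : (0:ℝ) ≤ x := le_of_lt hx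
  refine le_trans (phi_le hn hx0) (le_of_eq ?_)
  ring

lemma psiE_int {n : ℕ} (hn : 12 ≤ n) : IntegrableOn (psiE n) (Set.Ioi 0) := by
  refine integrableOn_of_le ?_ IQ_int (fun x _ => psiE_nonneg n x) (fun x hx => psiE_ptle hn hx)
  unfold psiE
  exact ((fE_cont n).pow 2).mul Real.continuous_exp

lemma chiE_int {n : ℕ} (hn : 1 ≤ n) : IntegrableOn (chiE n) (Set.Ioi 0) := by
  refine integrableOn_of_le ?_ (IQ_int.const_mul (9 * 1024 ^ 4))
    (fun x _ => chiE_nonneg n x) (fun x hx => chiE_ptle hn hx)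
  unfold chiE
  exact ((gE_cont n).pow 2).mul Real.continuous_exp

lemma phiE_int {n : ℕ} (hn : 400 ≤ n) : IntegrableOn (phiE n) (Set.Ioi 0) := by
  refine integrableOn_of_le ?_ (IQ_int.const_mul (10 ^ 5 * 1024 ^ 8 / (n : ℝ) ^ 4))
    (fun x _ => phiE_nonneg n x) (fun x hx => phiE_ptle hn hx)
  unfold phiE
  exact (((fE_cont n).sub (gE_cont n)).pow 2).mul Real.continuous_exp

lemma JS_le {n : ℕ} (hn : 12 ≤ n) : JS n ≤ IQ :=
  setIntegral_mono_on (psiE_int hn) IQ_int measurableSet_Ioi (fun x hx => psiE_ptle hn hx)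

lemma JC_le {n : ℕ} (hn : 1 ≤ n) : JC n ≤ 9 * 1024 ^ 4 * IQ := by
  have h := setIntegral_mono_on (chiE_int hn) (IQ_int.const_mul (9 * 1024 ^ 4))
    measurableSet_Ioi (fun x hx => chiE_ptle hn hx)
  calc JC n ≤ ∫ x in Set.Ioi (0:ℝ), 9 * 1024 ^ 4 * Real.exp (-(1/4) * x) := h
    _ = 9 * 1024 ^ 4 * IQ := integral_const_mul _ _

lemma JP_le {n : ℕ} (hn : 400 ≤ n) : JP n ≤ 10 ^ 5 * 1024 ^ 8 * IQ / (n : ℝ) ^ 4 := by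
  have h := setIntegral_mono_on (phiE_int hn)
    (IQ_int.const_mul (10 ^ 5 * 1024 ^ 8 / (n : ℝ) ^ 4))
    measurableSet_Ioi (fun x hx => phiE_ptle hn hx)
  calc JP n ≤ ∫ x in Set.Ioi (0:ℝ), (10 ^ 5 * 1024 ^ 8 / (n : ℝ) ^ 4) * Real.exp (-(1/4) * x) := h
    _ = (10 ^ 5 * 1024 ^ 8 / (n : ℝ) ^ 4) * IQ := integral_const_mul _ _
    _ = 10 ^ 5 * 1024 ^ 8 * IQ / (n : ℝ) ^ 4 := by ring

lemma JP_nonneg (n : ℕ) : 0 ≤ JP n :=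
  setIntegral_nonneg measurableSet_Ioi fun x _ => phiE_nonneg n x
lemma JS_nonneg (n : ℕ) : 0 ≤ JS n :=
  setIntegral_nonneg measurableSet_Ioi fun x _ => psiE_nonneg n x
lemma JC_nonneg (n : ℕ) : 0 ≤ JC n :=
  setIntegral_nonneg measurableSet_Ioi fun x _ => chiE_nonneg n x

lemma inner_le {n : ℕ} (hn : 400 ≤ n) (x : ℝ) :
    (∫ y in Set.Ioi (0:ℝ), (fE n x * fE n y - gE n x * gE n y) ^ 2 * (Real.exp x * Real.exp y))
      ≤ 2 * JS n * phiE n x + 2 * JP n * chiE n x := by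
  have hn12 : 12 ≤ n := by omega
  have hmaj : Integrable (fun y => 2 * phiE n x * psiE n y + 2 * chiE n x * phiE n y)
      (volume.restrict (Set.Ioi 0)) :=
    ((psiE_int hn12).const_mul _).add ((phiE_int hn).const_mul _)
  have hpt : ∀ y : ℝ,
      (fE n x * fE n y - gE n x * gE n y) ^ 2 * (Real.exp x * Real.exp y)
        ≤ 2 * phiE n x * psiE n y + 2 * chiE n x * phiE n y := by
    intro y
    have h1 : (fE n x * fE n y - gE n x * gE n y) ^ 2
        ≤ 2 * ((fE n x - gE n x) * fE n y) ^ 2 + 2 * (gE n x * (fE n y - gE n y)) ^ 2 := by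
      nlinarith [sq_nonneg ((fE n x - gE n x) * fE n y - gE n x * (fE n y - gE n y))]
    have h2 := mul_le_mul_of_nonneg_right h1
      (by positivity : (0:ℝ) ≤ Real.exp x * Real.exp y)
    calc (fE n x * fE n y - gE n x * gE n y) ^ 2 * (Real.exp x * Real.exp y)
        ≤ (2 * ((fE n x - gE n x) * fE n y) ^ 2 + 2 * (gE n x * (fE n y - gE n y)) ^ 2)
            * (Real.exp x * Real.exp y) := h2
      _ = 2 * phiE n x * psiE n y + 2 * chiE n x * phiE n y := by
          unfold phiE psiE chiE; ring
  refine le_trans (integral_mono_of_nonneg (ae_of_all _ fun y => by positivity) hmaj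
    (ae_of_all _ hpt)) ?_
  rw [integral_add ((psiE_int hn12).const_mul _) ((phiE_int hn).const_mul _),
    integral_const_mul, integral_const_mul]
  have e1 : (∫ y in Set.Ioi (0:ℝ), psiE n y) = JS n := rfl
  have e2 : (∫ y in Set.Ioi (0:ℝ), phiE n y) = JP n := rfl
  rw [e1, e2]
  exact le_of_eq (by ring)
/-- The double integral `Eₙ` arising in the Cauchy–Schwarz bound of `Kₙ` is `O(n⁻⁴)`. -/
theorem lecam2d_En_bound :
    ∃ C : ℝ, 0 < C ∧ ∃ N : ℕ, ∀ n : ℕ, N ≤ n →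
      (∫ x in Set.Ioi (0 : ℝ), ∫ y in Set.Ioi (0 : ℝ),
          ((max (1 - x / n) 0 * max (1 - y / n) 0) ^ (n - 3) -
            Real.exp (-x) * Real.exp (-y) *
              (1 + (3 * x - x ^ 2 / 2) / n) * (1 + (3 * y - y ^ 2 / 2) / n)) ^ 2 *
          Real.exp x * Real.exp y) ≤ C / (n : ℝ) ^ 4 := by
  refine ⟨2 * 10 ^ 5 * 1024 ^ 8 * (1 + 9 * 1024 ^ 4) * IQ ^ 2 + 1, ?_, 400, ?_⟩
  · nlinarith [sq_nonneg IQ]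
  intro n hn
  have hn12 : 12 ≤ n := by omega
  have hn1 : 1 ≤ n := by omega
  have hN0 : (0:ℝ) < (n : ℝ) ^ 4 := by
    have : (0:ℝ) < (n : ℝ) := by exact_mod_cast (by omega : 0 < n)
    positivity
  have hG : ∀ x y : ℝ,
      ((max (1 - x / (n:ℝ)) 0 * max (1 - y / (n:ℝ)) 0) ^ (n - 3) -
        Real.exp (-x) * Real.exp (-y) *
          (1 + (3 * x - x ^ 2 / 2) / (n:ℝ)) * (1 + (3 * y - y ^ 2 / 2) / (n:ℝ))) ^ 2 *
        Real.exp x * Real.exp y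
      = (fE n x * fE n y - gE n x * gE n y) ^ 2 * (Real.exp x * Real.exp y) := by
    intro x y
    simp only [fE, gE, mul_pow]
    ring
  simp only [hG]
  have houter : (∫ x in Set.Ioi (0:ℝ), ∫ y in Set.Ioi (0:ℝ),
      (fE n x * fE n y - gE n x * gE n y) ^ 2 * (Real.exp x * Real.exp y))
      ≤ 2 * JS n * JP n + 2 * JP n * JC n := by
    have hmaj : Integrable (fun x => 2 * JS n * phiE n x + 2 * JP n * chiE n x)
        (volume.restrict (Set.Ioi 0)) :=
      ((phiE_int hn).const_mul _).add ((chiE_int hn1).const_mul _)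
    refine le_trans (integral_mono_of_nonneg
      (ae_of_all _ fun x => setIntegral_nonneg measurableSet_Ioi fun y _ => by positivity)
      hmaj (ae_of_all _ fun x => inner_le hn x)) ?_
    rw [integral_add ((phiE_int hn).const_mul _) ((chiE_int hn1).const_mul _),
      integral_const_mul, integral_const_mul]
    have e1 : (∫ x in Set.Ioi (0:ℝ), phiE n x) = JP n := rfl
    have e2 : (∫ x in Set.Ioi (0:ℝ), chiE n x) = JC n := rfl
    rw [e1, e2]
  refine le_trans houter ?_
  have hJP := JP_le hn
  have hJS := JS_le hn12
  have hJC := JC_le hn1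
  have hA0 : (0:ℝ) ≤ 10 ^ 5 * 1024 ^ 8 * IQ / (n : ℝ) ^ 4 := by
    have := IQ_nonneg
    positivity
  have m1 : JS n * JP n ≤ IQ * (10 ^ 5 * 1024 ^ 8 * IQ / (n : ℝ) ^ 4) :=
    mul_le_mul hJS hJP (JP_nonneg n) IQ_nonneg
  have m2 : JP n * JC n ≤ (10 ^ 5 * 1024 ^ 8 * IQ / (n : ℝ) ^ 4) * (9 * 1024 ^ 4 * IQ) :=
    mul_le_mul hJP hJC (JC_nonneg n) hA0
  have hsum : 2 * JS n * JP n + 2 * JP n * JC n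
      ≤ (2 * 10 ^ 5 * 1024 ^ 8 * (1 + 9 * 1024 ^ 4) * IQ ^ 2) / (n : ℝ) ^ 4 := by
    have : 2 * (IQ * (10 ^ 5 * 1024 ^ 8 * IQ / (n : ℝ) ^ 4))
        + 2 * ((10 ^ 5 * 1024 ^ 8 * IQ / (n : ℝ) ^ 4) * (9 * 1024 ^ 4 * IQ))
        = (2 * 10 ^ 5 * 1024 ^ 8 * (1 + 9 * 1024 ^ 4) * IQ ^ 2) / (n : ℝ) ^ 4 := by
      field_simp
    linarith
  refine le_trans hsum ?_
  gcongr
  linarith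
end

section
/- Let X₁ and Y₁ be independent exponential random variables with mean 1, and let g : ℝ⁺ → ℝ be continuously differentiable with E[g²(X₁Y₁)] < ∞, E[|g′(X₁Y₁) X₁Y₁|] < ∞, and E[|X₁ g(X₁Y₁)|] < ∞. Then E[g′(X₁Y₁)·(X₁Y₁)] = Cov(g(X₁Y₁), X₁); equivalently, ∫₀^∞ ∫₀^∞ g′(xy) xy e^{−x} e^{−y} dy dx = ∫₀^∞ ∫₀^∞ g(xy)(x − 1) e^{−x} e^{−y} dy dx. -/
/-!
For fixed `y > 0`, put `G x = g (x * y)`, so that `g' (x * y) * (x * y) = G' x * x`. Integrating by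
parts against the Exp(1) density, with `(x e^{-x})' = (1 - x) e^{-x}`, gives the one-dimensional
Stein identity `E[G'(X) X] = E[G(X) (X - 1)]`; the boundary term `G(x) x e^{-x}` vanishes at `∞`
because it is integrable with integrable derivative, and at `0⁺` because `G(x) e^{-x}` is integrable
there while `x⁻¹` is not. Integrating over `y` (Fubini, using independence) gives
`E[g'(XY) XY] = E[g(XY) (X - 1)] = E[g(XY) X] - E[g(XY)] E[X]`, as `E[X] = 1`.
-/

open MeasureTheory ProbabilityTheory Real Set Filter Topology

theorem tendsto_nhdsGT_of_hasDerivAt_of_integrableOn {E : Type*} [NormedAddCommGroup E]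
    [NormedSpace ℝ E] [CompleteSpace E] {f f' : ℝ → E} {a b : ℝ} (hab : a < b)
    (hderiv : ∀ x ∈ Ioc a b, HasDerivAt f (f' x) x) (hint : IntegrableOn f' (Ioc a b)) :
    Tendsto f (𝓝[>] a) (𝓝 (f b - ∫ x in a..b, f' x)) := by
  have hprim : Tendsto (fun x => ∫ t in x..b, f' t) (𝓝[>] a) (𝓝 (∫ t in a..b, f' t)) := by
    have hcont := intervalIntegral.continuousOn_primitive_interval_left (μ := volume) (f := f')
      (a := a) (b := b) (by rwa [uIcc_of_le hab.le, integrableOn_Icc_iff_integrableOn_Ioc])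
    refine (hcont a left_mem_uIcc).tendsto.mono_left ?_
    rw [← nhdsWithin_Ioc_eq_nhdsGT hab, uIcc_of_le hab.le]
    exact nhdsWithin_mono _ Ioc_subset_Icc_self
  refine (tendsto_const_nhds.sub hprim).congr' ?_
  filter_upwards [Ioc_mem_nhdsGT hab] with x hx
  have hsub : Icc x b ⊆ Ioc a b := fun y hy => ⟨hx.1.trans_le hy.1, hy.2⟩
  rw [intervalIntegral.integral_eq_sub_of_hasDerivAt_of_le hx.2
    (fun y hy => (hderiv y (hsub hy)).continuousAt.continuousWithinAt)
    (fun y hy => hderiv y (hsub (Ioo_subset_Icc_self hy)))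
    ((intervalIntegrable_iff_integrableOn_Ioc_of_le hx.2).2
      (hint.mono_set (Ioc_subset_Icc_self.trans hsub))), sub_sub_cancel]

theorem MeasureTheory.IntegrableAtFilter.eq_zero_of_tendsto_mul_nhdsGT_zero {φ : ℝ → ℝ} {L : ℝ}
    (hφ : IntegrableAtFilter φ (𝓝[>] 0)) (hL : Tendsto (fun x => x * φ x) (𝓝[>] 0) (𝓝 L)) :
    L = 0 := by
  by_contra hL0
  have hL0' : 0 < |L| := abs_pos.2 hL0
  obtain ⟨s, hs, hφs⟩ := hφ
  have hbound : ∀ᶠ x in 𝓝[>] 0, x ∈ s ∧ 0 < x ∧ |L| / 2 ≤ x * |φ x| := by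
    filter_upwards [hs, self_mem_nhdsWithin,
      hL.eventually (eventually_abs_sub_lt L (half_pos hL0'))] with x hxs hx hxL
    refine ⟨hxs, hx, ?_⟩
    have := abs_sub_abs_le_abs_sub L (x * φ x)
    rw [abs_sub_comm, abs_mul, abs_of_pos (show 0 < x from hx)] at this
    linarith
  obtain ⟨δ, hδ : 0 < δ, hδs⟩ := mem_nhdsGT_iff_exists_Ioo_subset.1 hbound
  have hinv : IntegrableOn (fun x => x⁻¹) (Ioo 0 δ) := by
    refine ((hφs.mono_set fun x hx => (hδs hx).1).norm.const_mul (2 / |L|)).mono'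
      (by fun_prop) ?_
    filter_upwards [ae_restrict_mem measurableSet_Ioo] with x hx
    obtain ⟨-, hx0, hxφ⟩ := hδs hx
    rw [norm_inv, Real.norm_of_nonneg hx0.le, inv_le_iff_one_le_mul₀ hx0, Real.norm_eq_abs,
      div_mul_eq_mul_div, div_mul_eq_mul_div, le_div_iff₀ hL0']
    linarith
  have := (intervalIntegrable_iff_integrableOn_Ioo_of_le hδ.le).2 hinv
  simp [intervalIntegrable_inv_iff, hδ.ne, hδ.le] at this

theorem ProbabilityTheory.IndepFun.measurePreserving_prodMk {Ω α β : Type*} [MeasurableSpace Ω]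
    [MeasurableSpace α] [MeasurableSpace β] {P : Measure Ω} [IsFiniteMeasure P] {X : Ω → α}
    {Y : Ω → β} {μ : Measure α} {ν : Measure β} (hmX : Measurable X) (hmY : Measurable Y)
    (hindep : IndepFun X Y P) (hX : P.map X = μ) (hY : P.map Y = ν) :
    MeasurePreserving (fun ω => (X ω, Y ω)) P (μ.prod ν) :=
  ⟨hmX.prodMk hmY, by
    rw [(indepFun_iff_map_prod_eq_prod_map_map hmX.aemeasurable hmY.aemeasurable).1 hindep,
      hX, hY]⟩

theorem MeasureTheory.MeasurePreserving.integral_comp_of_aestronglyMeasurable {α β E : Type*}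
    [MeasurableSpace α] [MeasurableSpace β] [NormedAddCommGroup E] [NormedSpace ℝ E]
    {μ : Measure α} {ν : Measure β} {f : α → β} (hf : MeasurePreserving f μ ν) {g : β → E}
    (hg : AEStronglyMeasurable g ν) : ∫ x, g (f x) ∂μ = ∫ y, g y ∂ν := by
  rw [← hf.map_eq, integral_map hf.aemeasurable (hf.map_eq ▸ hg)]

theorem expMeasure_one_eq_withDensity :
    expMeasure 1 = (volume.restrict (Ioi 0)).withDensity fun x => ENNReal.ofReal (exp (-x)) := by
  rw [restrict_Ioi_eq_restrict_Ici, ← withDensity_indicator measurableSet_Ici, expMeasure,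
    gammaMeasure]
  congr 1
  ext x
  by_cases hx : 0 ≤ x <;> simp [gammaPDF, gammaPDFReal, hx]

instance : IsProbabilityMeasure (expMeasure 1) := isProbabilityMeasure_expMeasure one_pos

theorem ae_pos_expMeasure_one : ∀ᵐ x ∂expMeasure 1, 0 < x := by
  rw [expMeasure_one_eq_withDensity]
  exact (withDensity_absolutelyContinuous _ _).ae_le (ae_restrict_mem measurableSet_Ioi)

theorem integral_expMeasure_one (f : ℝ → ℝ) :
    ∫ x, f x ∂expMeasure 1 = ∫ x in Ioi 0, f x * exp (-x) := by
  rw [expMeasure_one_eq_withDensity, integral_withDensity_eq_integral_toReal_smul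
    (by fun_prop) (.of_forall fun _ => ENNReal.ofReal_lt_top)]
  simp [ENNReal.toReal_ofReal (exp_pos _).le, mul_comm]

theorem integrable_expMeasure_one_iff {f : ℝ → ℝ} :
    Integrable f (expMeasure 1) ↔ IntegrableOn (fun x => f x * exp (-x)) (Ioi 0) := by
  rw [expMeasure_one_eq_withDensity, integrable_withDensity_iff (by fun_prop)
    (.of_forall fun _ => ENNReal.ofReal_lt_top)]
  simp [ENNReal.toReal_ofReal (exp_pos _).le, IntegrableOn]

theorem integral_id_expMeasure_one : ∫ x, x ∂expMeasure 1 = 1 := by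
  rw [integral_expMeasure_one, ← Gamma_two, Gamma_eq_integral two_pos]
  refine setIntegral_congr_fun measurableSet_Ioi fun x _ => ?_
  norm_num [mul_comm]

theorem integral_deriv_mul_id_expMeasure_one {G G' : ℝ → ℝ}
    (hderiv : ∀ x ∈ Ioi 0, HasDerivAt G (G' x) x)
    (hG' : Integrable (fun x => G' x * x) (expMeasure 1)) (hG : Integrable G (expMeasure 1))
    (hxG : Integrable (fun x => x * G x) (expMeasure 1)) :
    ∫ x, G' x * x ∂expMeasure 1 = ∫ x, G x * (x - 1) ∂expMeasure 1 := by
  rw [integrable_expMeasure_one_iff] at hG' hG hxG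
  rw [integral_expMeasure_one, integral_expMeasure_one]
  set v : ℝ → ℝ := fun x => x * exp (-x)
  set v' : ℝ → ℝ := fun x => (1 - x) * exp (-x)
  have hv : ∀ x ∈ Ioi (0 : ℝ), HasDerivAt v (v' x) x := fun x _ =>
    ((hasDerivAt_id' x).mul (hasDerivAt_neg' x).exp).congr_deriv (by ring)
  have hG'v : IntegrableOn (G' * v) (Ioi 0) :=
    hG'.congr_fun (fun x _ => by simp only [Pi.mul_apply, v]; ring) measurableSet_Ioi
  have hGv' : IntegrableOn (G * v') (Ioi 0) :=
    (hG.sub hxG).congr_fun (fun x _ => by simp only [Pi.mul_apply, Pi.sub_apply, v']; ring)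
      measurableSet_Ioi
  have hderiv_Gv : ∀ x ∈ Ioi (0 : ℝ), HasDerivAt (G * v) (G' x * v x + G x * v' x) x :=
    fun x hx => (hderiv x hx).mul (hv x hx)
  have hbot : Tendsto (G * v) (𝓝[>] 0) (𝓝 0) := by
    have hlim := tendsto_nhdsGT_of_hasDerivAt_of_integrableOn one_pos
      (fun x hx => hderiv_Gv x hx.1) ((hG'v.add hGv').mono_set Ioc_subset_Ioi_self)
    rwa [IntegrableAtFilter.eq_zero_of_tendsto_mul_nhdsGT_zero ⟨Ioi 0, self_mem_nhdsWithin, hG⟩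
      (hlim.congr fun x => by simp only [Pi.mul_apply, v]; ring)] at hlim
  have htop : Tendsto (G * v) atTop (𝓝 0) :=
    tendsto_zero_of_hasDerivAt_of_integrableOn_Ioi hderiv_Gv (hG'v.add hGv')
      (hxG.congr_fun (fun x _ => by simp only [Pi.mul_apply, v]; ring) measurableSet_Ioi)
  have hibp := integral_Ioi_deriv_mul_eq_sub hderiv hv (hG'v.add hGv') hbot htop
  rw [integral_add (f := fun x => G' x * v x) (g := fun x => G x * v' x) hG'v hGv',
    sub_zero] at hibp
  calc ∫ x in Ioi 0, G' x * x * exp (-x) = ∫ x in Ioi 0, G' x * v x := by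
        refine setIntegral_congr_fun measurableSet_Ioi fun x _ => by simp only [v]; ring
    _ = -∫ x in Ioi 0, G x * v' x := eq_neg_of_add_eq_zero_left hibp
    _ = ∫ x in Ioi 0, G x * (x - 1) * exp (-x) := by
        rw [← integral_neg]
        refine setIntegral_congr_fun measurableSet_Ioi fun x _ => by simp only [v']; ring

theorem integral_deriv_comp_mul_prod_expMeasure_one {g g' : ℝ → ℝ}
    (hderiv : ∀ x : ℝ, 0 < x → HasDerivAt g (g' x) x)
    (hg' : Integrable (fun p : ℝ × ℝ => g' (p.1 * p.2) * (p.1 * p.2))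
      ((expMeasure 1).prod (expMeasure 1)))
    (hxg : Integrable (fun p : ℝ × ℝ => p.1 * g (p.1 * p.2)) ((expMeasure 1).prod (expMeasure 1)))
    (hg : Integrable (fun p : ℝ × ℝ => g (p.1 * p.2)) ((expMeasure 1).prod (expMeasure 1))) :
    ∫ p, g' (p.1 * p.2) * (p.1 * p.2) ∂(expMeasure 1).prod (expMeasure 1) =
      ∫ p, g (p.1 * p.2) * (p.1 - 1) ∂(expMeasure 1).prod (expMeasure 1) := by
  have hg₁ : Integrable (fun p : ℝ × ℝ => g (p.1 * p.2) * (p.1 - 1))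
      ((expMeasure 1).prod (expMeasure 1)) :=
    (hxg.sub hg).congr (.of_forall fun p => by simp only [Pi.sub_apply]; ring)
  rw [integral_prod_symm _ hg', integral_prod_symm _ hg₁]
  refine integral_congr_ae ?_
  filter_upwards [ae_pos_expMeasure_one, hg'.prod_left_ae, hxg.prod_left_ae, hg.prod_left_ae]
    with y hy hg'y hxgy hgy
  have hderiv_y : ∀ x ∈ Ioi 0, HasDerivAt (fun x => g (x * y)) (g' (x * y) * y) x :=
    fun x hx => (hderiv _ (mul_pos hx hy)).comp x (hasDerivAt_mul_const y)
  have := integral_deriv_mul_id_expMeasure_one hderiv_y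
    (hg'y.congr (.of_forall fun x => by ring)) hgy hxgy
  simpa only [mul_assoc, mul_comm y] using this

theorem aestronglyMeasurable_comp_mul_prod_expMeasure_one {h : ℝ → ℝ}
    (hh : ContinuousOn h (Ioi 0)) :
    AEStronglyMeasurable (fun p : ℝ × ℝ => h (p.1 * p.2)) ((expMeasure 1).prod (expMeasure 1)) := by
  have hmem : ∀ᵐ p ∂(expMeasure 1).prod (expMeasure 1), p ∈ Ioi (0 : ℝ) ×ˢ Ioi (0 : ℝ) :=
    (Measure.quasiMeasurePreserving_fst.ae ae_pos_expMeasure_one).and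
      (Measure.quasiMeasurePreserving_snd.ae ae_pos_expMeasure_one)
  rw [← Measure.restrict_eq_self_of_ae_mem hmem]
  refine (hh.comp (by fun_prop) fun p hp => ?_).aestronglyMeasurable
    (measurableSet_Ioi.prod measurableSet_Ioi)
  exact mem_Ioi.2 (mul_pos hp.1 hp.2)

theorem integral_prod_expMeasure_one {f : ℝ × ℝ → ℝ}
    (hf : Integrable f ((expMeasure 1).prod (expMeasure 1))) :
    ∫ p, f p ∂(expMeasure 1).prod (expMeasure 1) =
      ∫ x in Ioi 0, ∫ y in Ioi 0, f (x, y) * exp (-x) * exp (-y) := by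
  rw [integral_prod _ hf, integral_expMeasure_one]
  refine setIntegral_congr_fun measurableSet_Ioi fun x _ => ?_
  rw [integral_expMeasure_one, ← integral_mul_const]
  refine setIntegral_congr_fun measurableSet_Ioi fun y _ => by ring

/-- Partial integration identity: `E[g'(X₁Y₁)·(X₁Y₁)] = Cov(g(X₁Y₁), X₁)`, equivalently
`∫₀^∞∫₀^∞ g'(xy) xy e^(−x) e^(−y) dy dx = ∫₀^∞∫₀^∞ g(xy)(x − 1) e^(−x) e^(−y) dy dx`. -/
theorem lecam2d_partial_integration
    {Ω : Type*} [MeasureSpace Ω] [IsProbabilityMeasure (ℙ : Measure Ω)]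
    (X Y : Ω → ℝ) (hmX : Measurable X) (hmY : Measurable Y)
    (hindep : IndepFun X Y ℙ)
    (hX : Measure.map X ℙ = expMeasure 1) (hY : Measure.map Y ℙ = expMeasure 1)
    (g g' : ℝ → ℝ)
    (hderiv : ∀ x : ℝ, 0 < x → HasDerivAt g (g' x) x)
    (hg'cont : ContinuousOn g' (Set.Ioi 0))
    (hg2 : Integrable (fun ω => (g (X ω * Y ω)) ^ 2) ℙ)
    (hg'int : Integrable (fun ω => |g' (X ω * Y ω) * (X ω * Y ω)| ) ℙ)
    (hXg : Integrable (fun ω => |X ω * g (X ω * Y ω)| ) ℙ) :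
    (∫ ω, g' (X ω * Y ω) * (X ω * Y ω) ∂ℙ) =
        (∫ ω, g (X ω * Y ω) * X ω ∂ℙ) -
          (∫ ω, g (X ω * Y ω) ∂ℙ) * (∫ ω, X ω ∂ℙ) ∧
      (∫ x in Set.Ioi (0 : ℝ), ∫ y in Set.Ioi (0 : ℝ),
          g' (x * y) * (x * y) * Real.exp (-x) * Real.exp (-y)) =
        ∫ x in Set.Ioi (0 : ℝ), ∫ y in Set.Ioi (0 : ℝ),
          g (x * y) * (x - 1) * Real.exp (-x) * Real.exp (-y) := by
  set P := (expMeasure 1).prod (expMeasure 1)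
  have hZ : MeasurePreserving (fun ω => (X ω, Y ω)) ℙ P :=
    hindep.measurePreserving_prodMk hmX hmY hX hY
  have mg : AEStronglyMeasurable (fun p : ℝ × ℝ => g (p.1 * p.2)) P :=
    aestronglyMeasurable_comp_mul_prod_expMeasure_one
      fun x hx => (hderiv x hx).continuousAt.continuousWithinAt
  have mg' : AEStronglyMeasurable (fun p : ℝ × ℝ => g' (p.1 * p.2) * (p.1 * p.2)) P :=
    (aestronglyMeasurable_comp_mul_prod_expMeasure_one hg'cont).mul
      (continuous_fst.mul continuous_snd).aestronglyMeasurable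
  have mxg : AEStronglyMeasurable (fun p : ℝ × ℝ => p.1 * g (p.1 * p.2)) P :=
    continuous_fst.aestronglyMeasurable.mul mg
  have ig : Integrable (fun p : ℝ × ℝ => g (p.1 * p.2)) P := (hZ.integrable_comp mg).1 <|
    MemLp.integrable one_le_two ((memLp_two_iff_integrable_sq (mg.comp_measurePreserving hZ)).2 hg2)
  have ig' : Integrable (fun p : ℝ × ℝ => g' (p.1 * p.2) * (p.1 * p.2)) P :=
    (hZ.integrable_comp mg').1 ((integrable_norm_iff (mg'.comp_measurePreserving hZ)).1 hg'int)
  have ixg : Integrable (fun p : ℝ × ℝ => p.1 * g (p.1 * p.2)) P :=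
    (hZ.integrable_comp mxg).1 ((integrable_norm_iff (mxg.comp_measurePreserving hZ)).1 hXg)
  have ig₁ : Integrable (fun p : ℝ × ℝ => g (p.1 * p.2) * (p.1 - 1)) P :=
    (ixg.sub ig).congr (.of_forall fun p => by simp only [Pi.sub_apply]; ring)
  have key := integral_deriv_comp_mul_prod_expMeasure_one hderiv ig' ixg ig
  have hmean : ∫ ω, X ω ∂ℙ = 1 :=
    (MeasurePreserving.integral_comp_of_aestronglyMeasurable ⟨hmX, hX⟩
      aestronglyMeasurable_id).trans integral_id_expMeasure_one
  refine ⟨?_, by rw [← integral_prod_expMeasure_one ig', ← integral_prod_expMeasure_one ig₁, key]⟩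
  rw [hmean, mul_one, hZ.integral_comp_of_aestronglyMeasurable mg',
    hZ.integral_comp_of_aestronglyMeasurable (g := fun p => g (p.1 * p.2) * p.1)
      (mg.mul continuous_fst.aestronglyMeasurable),
    hZ.integral_comp_of_aestronglyMeasurable mg, key, ← integral_sub
      (ixg.congr (.of_forall fun p => mul_comm _ _)) ig]
  exact integral_congr_ae (.of_forall fun p => mul_sub_one _ _)
end
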